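/- arXiv:1211.7091 — 11 statements merged into one kernel-verified Lean document; each statement's English description precedes it below -/
import Mathlib

section
/- Let α ≥ 0, m ≥ 1 and N₁, N₂, N₃ ≥ 1 be integers, and let g₁, g₂, g₃ be complex matrices of sizes α+mN₁, α+mN₂, α+mN₃ respectively. Then the matrices (g₁ ∘ g₂) ∘ g₃ and g₁ ∘ (g₂ ∘ g₃), both of size α+m(N₁+N₂+N₃), lie in the same GL(N₁+N₂+N₃,ℂ)-conjugacy class: there exists an invertible complex (N₁+N₂+N₃)×(N₁+N₂+N₃) matrix u such that (g₁ ∘ g₂) ∘ g₃ = ι(u) · (g₁ ∘ (g₂ ∘ g₃)) · ι(u)⁻¹. -/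
open Matrix
open scoped Kronecker

/-- The block-diagonal matrix `ι(u) = 1_A ⊕ (1_V ⊗ u)` of size `A ⊕ V × NN`. -/
noncomputable def iotaM (A V NN : Type*) [DecidableEq A] [DecidableEq V] [DecidableEq NN]
    (u : Matrix NN NN ℂ) : Matrix (A ⊕ V × NN) (A ⊕ V × NN) ℂ :=
  Matrix.fromBlocks 1 0 0 ((1 : Matrix V V ℂ) ⊗ₖ u)

/-- The characteristic function `χ_g(S) = a + b S̃ (1 - d S̃)⁻¹ c`, where
`g = [[a,b],[c,d]]` and `S̃ = S ⊗ 1`. -/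
noncomputable def chiM {A V NN : Type*} [Fintype V] [Fintype NN] [DecidableEq V]
    [DecidableEq NN]
    (g : Matrix (A ⊕ V × NN) (A ⊕ V × NN) ℂ) (S : Matrix V V ℂ) : Matrix A A ℂ :=
  g.toBlocks₁₁ + g.toBlocks₁₂ * (S ⊗ₖ (1 : Matrix NN NN ℂ)) *
    ((1 : Matrix (V × NN) (V × NN) ℂ) - g.toBlocks₂₂ * (S ⊗ₖ (1 : Matrix NN NN ℂ)))⁻¹ *
    g.toBlocks₂₁

/-- `p_g(S) = det(1 - d (S ⊗ 1))`. -/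
noncomputable def pM {A V NN : Type*} [Fintype V] [Fintype NN] [DecidableEq V] [DecidableEq NN]
    (g : Matrix (A ⊕ V × NN) (A ⊕ V × NN) ℂ) (S : Matrix V V ℂ) : ℂ :=
  ((1 : Matrix (V × NN) (V × NN) ℂ) - g.toBlocks₂₂ * (S ⊗ₖ (1 : Matrix NN NN ℂ))).det

/-- Identification `(A ⊕ V × N₁) ⊕ V × N₂ ≃ A ⊕ V × (N₁ ⊕ N₂)`. -/
def sumEquivL (A V N₁ N₂ : Type*) : (A ⊕ V × N₁) ⊕ V × N₂ ≃ A ⊕ V × (N₁ ⊕ N₂) :=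
  (Equiv.sumAssoc A (V × N₁) (V × N₂)).trans
    ((Equiv.refl A).sumCongr (Equiv.prodSumDistrib V N₁ N₂).symm)

/-- Identification `(A ⊕ V × N₂) ⊕ V × N₁ ≃ A ⊕ V × (N₁ ⊕ N₂)`. -/
def sumEquivR (A V N₁ N₂ : Type*) : (A ⊕ V × N₂) ⊕ V × N₁ ≃ A ⊕ V × (N₁ ⊕ N₂) :=
  (Equiv.sumAssoc A (V × N₂) (V × N₁)).trans
    ((Equiv.refl A).sumCongr (((Equiv.sumComm (V × N₂) (V × N₁))).trans
      (Equiv.prodSumDistrib V N₁ N₂).symm))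

/-- `g̃`: extension of `g` acting as the identity on `V × N₂`. -/
noncomputable def tildeG {A V N₁ N₂ : Type*} [DecidableEq A] [DecidableEq V] [DecidableEq N₁]
    [DecidableEq N₂] (g : Matrix (A ⊕ V × N₁) (A ⊕ V × N₁) ℂ) :
    Matrix (A ⊕ V × (N₁ ⊕ N₂)) (A ⊕ V × (N₁ ⊕ N₂)) ℂ :=
  Matrix.reindex (sumEquivL A V N₁ N₂) (sumEquivL A V N₁ N₂) (Matrix.fromBlocks g 0 0 1)

/-- `ĥ`: extension of `h` acting as the identity on `V × N₁`. -/
noncomputable def hatH {A V N₁ N₂ : Type*} [DecidableEq A] [DecidableEq V] [DecidableEq N₁]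
    [DecidableEq N₂] (h : Matrix (A ⊕ V × N₂) (A ⊕ V × N₂) ℂ) :
    Matrix (A ⊕ V × (N₁ ⊕ N₂)) (A ⊕ V × (N₁ ⊕ N₂)) ℂ :=
  Matrix.reindex (sumEquivR A V N₁ N₂) (sumEquivR A V N₁ N₂) (Matrix.fromBlocks h 0 0 1)

/-- The ∘-product `g ∘ h := g̃ ⬝ ĥ`. -/
noncomputable def circM {A V N₁ N₂ : Type*} [DecidableEq A] [DecidableEq V] [DecidableEq N₁]
    [DecidableEq N₂] [Fintype A] [Fintype V] [Fintype N₁] [Fintype N₂]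
    (g : Matrix (A ⊕ V × N₁) (A ⊕ V × N₁) ℂ) (h : Matrix (A ⊕ V × N₂) (A ⊕ V × N₂) ℂ) :
    Matrix (A ⊕ V × (N₁ ⊕ N₂)) (A ⊕ V × (N₁ ⊕ N₂)) ℂ :=
  tildeG g * hatH h

/-- Canonical identification reversing associativity of the inner-space sums. -/
def assocE (α m N₁ N₂ N₃ : ℕ) :
    (Fin α ⊕ Fin m × (Fin N₁ ⊕ (Fin N₂ ⊕ Fin N₃))) ≃
      (Fin α ⊕ Fin m × ((Fin N₁ ⊕ Fin N₂) ⊕ Fin N₃)) :=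
  (Equiv.refl (Fin α)).sumCongr
    ((Equiv.refl (Fin m)).prodCongr (Equiv.sumAssoc (Fin N₁) (Fin N₂) (Fin N₃)).symm)

section Aux

lemma reindexMulAux {n p : Type*} [Fintype n] [Fintype p] [DecidableEq n] [DecidableEq p]
    (e : n ≃ p) (M N : Matrix n n ℂ) :
    Matrix.reindex e e (M * N) = Matrix.reindex e e M * Matrix.reindex e e N := by
  simp only [Matrix.reindex_apply]
  rw [Matrix.submatrix_mul_equiv]

lemma tildeG_mul {A V N₁ N₂ : Type*} [DecidableEq A] [DecidableEq V] [DecidableEq N₁]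
    [DecidableEq N₂] [Fintype A] [Fintype V] [Fintype N₁] [Fintype N₂]
    (M N : Matrix (A ⊕ V × N₁) (A ⊕ V × N₁) ℂ) :
    tildeG (N₂ := N₂) (M * N) = tildeG M * tildeG N := by
  simp only [tildeG, Matrix.reindex_apply]
  rw [Matrix.submatrix_mul_equiv, Matrix.fromBlocks_multiply]
  simp

lemma hatH_mul {A V N₁ N₂ : Type*} [DecidableEq A] [DecidableEq V] [DecidableEq N₁]
    [DecidableEq N₂] [Fintype A] [Fintype V] [Fintype N₁] [Fintype N₂]
    (M N : Matrix (A ⊕ V × N₂) (A ⊕ V × N₂) ℂ) :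
    hatH (N₁ := N₁) (M * N) = hatH M * hatH N := by
  simp only [hatH, Matrix.reindex_apply]
  rw [Matrix.submatrix_mul_equiv, Matrix.fromBlocks_multiply]
  simp

variable (α m N₁ N₂ N₃ : ℕ)

lemma L1 (g₁ : Matrix (Fin α ⊕ Fin m × Fin N₁) (Fin α ⊕ Fin m × Fin N₁) ℂ) :
    tildeG (N₂ := Fin N₃) (tildeG (N₂ := Fin N₂) g₁) =
      Matrix.reindex (assocE α m N₁ N₂ N₃) (assocE α m N₁ N₂ N₃)
        (tildeG (N₂ := Fin N₂ ⊕ Fin N₃) g₁) := by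
  ext i j
  rcases i with a | ⟨v, (n|n)|n⟩ <;> rcases j with b | ⟨w, (p|p)|p⟩ <;>
    simp [tildeG, sumEquivL, assocE, Matrix.one_apply, Prod.ext_iff]

lemma L2 (g₂ : Matrix (Fin α ⊕ Fin m × Fin N₂) (Fin α ⊕ Fin m × Fin N₂) ℂ) :
    tildeG (N₂ := Fin N₃) (hatH (N₁ := Fin N₁) g₂) =
      Matrix.reindex (assocE α m N₁ N₂ N₃) (assocE α m N₁ N₂ N₃)
        (hatH (N₁ := Fin N₁) (tildeG (N₂ := Fin N₃) g₂)) := by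
  ext i j
  rcases i with a | ⟨v, (n|n)|n⟩ <;> rcases j with b | ⟨w, (p|p)|p⟩ <;>
    simp [tildeG, hatH, sumEquivL, sumEquivR, assocE, Matrix.one_apply, Prod.ext_iff]

lemma L3 (g₃ : Matrix (Fin α ⊕ Fin m × Fin N₃) (Fin α ⊕ Fin m × Fin N₃) ℂ) :
    hatH (N₁ := Fin N₁ ⊕ Fin N₂) g₃ =
      Matrix.reindex (assocE α m N₁ N₂ N₃) (assocE α m N₁ N₂ N₃)
        (hatH (N₁ := Fin N₁) (hatH (N₁ := Fin N₂) g₃)) := by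
  ext i j
  rcases i with a | ⟨v, (n|n)|n⟩ <;> rcases j with b | ⟨w, (p|p)|p⟩ <;>
    simp [hatH, sumEquivR, assocE, Matrix.one_apply, Prod.ext_iff]

end Aux

/-- the ∘-product is associative up to `GL(N₁+N₂+N₃, ℂ)`-conjugacy. -/
theorem circ_assoc (α m N₁ N₂ N₃ : ℕ) (hm : 1 ≤ m) (hN₁ : 1 ≤ N₁) (hN₂ : 1 ≤ N₂)
    (hN₃ : 1 ≤ N₃)
    (g₁ : Matrix (Fin α ⊕ Fin m × Fin N₁) (Fin α ⊕ Fin m × Fin N₁) ℂ)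
    (g₂ : Matrix (Fin α ⊕ Fin m × Fin N₂) (Fin α ⊕ Fin m × Fin N₂) ℂ)
    (g₃ : Matrix (Fin α ⊕ Fin m × Fin N₃) (Fin α ⊕ Fin m × Fin N₃) ℂ) :
    ∃ u : Matrix ((Fin N₁ ⊕ Fin N₂) ⊕ Fin N₃) ((Fin N₁ ⊕ Fin N₂) ⊕ Fin N₃) ℂ,
      IsUnit u ∧
      circM (circM g₁ g₂) g₃ =
        iotaM (Fin α) (Fin m) ((Fin N₁ ⊕ Fin N₂) ⊕ Fin N₃) u *
          (Matrix.reindex (assocE α m N₁ N₂ N₃) (assocE α m N₁ N₂ N₃)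
            (circM g₁ (circM g₂ g₃))) *
          (iotaM (Fin α) (Fin m) ((Fin N₁ ⊕ Fin N₂) ⊕ Fin N₃) u)⁻¹ := by
  refine ⟨1, isUnit_one, ?_⟩
  have hiota : iotaM (Fin α) (Fin m) ((Fin N₁ ⊕ Fin N₂) ⊕ Fin N₃) (1 : Matrix _ _ ℂ) = 1 := by
    simp [iotaM]
  rw [hiota, inv_one, one_mul, mul_one]
  show tildeG (tildeG g₁ * hatH g₂) * hatH g₃ = _
  rw [tildeG_mul, L1, L2, L3, show circM g₁ (circM g₂ g₃) = tildeG g₁ * hatH (tildeG g₂ * hatH g₃) from rfl,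
    hatH_mul, reindexMulAux, reindexMulAux, mul_assoc]
end

section
/- Let g be a complex matrix of size α+mN with blocks a, b, c, d, let u be an invertible N×N complex matrix, and let S be an m×m complex matrix such that 1 - d·S̃ is invertible. Then for the conjugated matrix g' = ι(u)·g·ι(u)⁻¹ (with blocks a', b', c', d'), the matrix 1 - d'·S̃ is also invertible and χ_{g'}(S) = χ_g(S). In other words, the characteristic function depends only on the GL(N,ℂ)-conjugacy class of g. -/
open Matrix
open scoped Kronecker

/-- the characteristic function depends only on the `GL(N,ℂ)`-conjugacy
class of `g`. -/
theorem chi_conjugation_invariant (α m N : ℕ) (hm : 1 ≤ m) (hN : 1 ≤ N)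
    (g : Matrix (Fin α ⊕ Fin m × Fin N) (Fin α ⊕ Fin m × Fin N) ℂ)
    (u : Matrix (Fin N) (Fin N) ℂ) (hu : IsUnit u)
    (S : Matrix (Fin m) (Fin m) ℂ)
    (hS : IsUnit ((1 : Matrix (Fin m × Fin N) (Fin m × Fin N) ℂ) -
      g.toBlocks₂₂ * (S ⊗ₖ (1 : Matrix (Fin N) (Fin N) ℂ)))) :
    IsUnit ((1 : Matrix (Fin m × Fin N) (Fin m × Fin N) ℂ) -
        (iotaM (Fin α) (Fin m) (Fin N) u * g *
          (iotaM (Fin α) (Fin m) (Fin N) u)⁻¹).toBlocks₂₂ *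
          (S ⊗ₖ (1 : Matrix (Fin N) (Fin N) ℂ))) ∧
    chiM (iotaM (Fin α) (Fin m) (Fin N) u * g * (iotaM (Fin α) (Fin m) (Fin N) u)⁻¹) S =
      chiM g S := by
  classical
  set T := S ⊗ₖ (1 : Matrix (Fin N) (Fin N) ℂ) with hT
  set q := (1 : Matrix (Fin m) (Fin m) ℂ) ⊗ₖ u with hq
  have hud : IsUnit u.det := (Matrix.isUnit_iff_isUnit_det u).mp hu
  have hqd : IsUnit q.det := by
    rw [hq, Matrix.det_kronecker]
    simpa using hud.pow _
  have hqq : q * q⁻¹ = 1 := Matrix.mul_nonsing_inv q hqd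
  have hqq' : q⁻¹ * q = 1 := Matrix.nonsing_inv_mul q hqd
  have hcomm : q * T = T * q := by
    rw [hq, hT, ← Matrix.mul_kronecker_mul, ← Matrix.mul_kronecker_mul, one_mul, mul_one,
      one_mul, mul_one]
  have hcomm' : q⁻¹ * T = T * q⁻¹ := by
    calc q⁻¹ * T = q⁻¹ * T * (q * q⁻¹) := by rw [hqq, Matrix.mul_one]
      _ = q⁻¹ * (T * q) * q⁻¹ := by simp only [Matrix.mul_assoc]
      _ = q⁻¹ * (q * T) * q⁻¹ := by rw [hcomm]
      _ = T * q⁻¹ := by rw [← Matrix.mul_assoc, hqq', Matrix.one_mul]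
  have hinv : (iotaM (Fin α) (Fin m) (Fin N) u)⁻¹ =
      Matrix.fromBlocks 1 0 0 q⁻¹ := by
    apply Matrix.inv_eq_right_inv
    rw [iotaM, Matrix.fromBlocks_multiply]
    simp [hqq, ← hq, Matrix.fromBlocks_one]
  set P := iotaM (Fin α) (Fin m) (Fin N) u * g * (iotaM (Fin α) (Fin m) (Fin N) u)⁻¹ with hP
  have hPdef : P = Matrix.fromBlocks g.toBlocks₁₁ (g.toBlocks₁₂ * q⁻¹)
      (q * g.toBlocks₂₁) (q * g.toBlocks₂₂ * q⁻¹) := by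
    rw [hP, hinv, iotaM, ← Matrix.fromBlocks_toBlocks g, Matrix.fromBlocks_multiply,
      Matrix.fromBlocks_multiply]
    simp [← hq, Matrix.mul_assoc]
  have hb11 : P.toBlocks₁₁ = g.toBlocks₁₁ := by rw [hPdef]; rfl
  have hb12 : P.toBlocks₁₂ = g.toBlocks₁₂ * q⁻¹ := by rw [hPdef]; rfl
  have hb21 : P.toBlocks₂₁ = q * g.toBlocks₂₁ := by rw [hPdef]; rfl
  have hb22 : P.toBlocks₂₂ = q * g.toBlocks₂₂ * q⁻¹ := by rw [hPdef]; rfl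
  set X := (1 : Matrix (Fin m × Fin N) (Fin m × Fin N) ℂ) - g.toBlocks₂₂ * T with hX
  have hkey : (1 : Matrix (Fin m × Fin N) (Fin m × Fin N) ℂ) - P.toBlocks₂₂ * T
      = q * X * q⁻¹ := by
    rw [hb22, hX, Matrix.mul_sub, Matrix.sub_mul, Matrix.mul_one, hqq]
    congr 1
    simp only [Matrix.mul_assoc]
    rw [hcomm']
  refine ⟨?_, ?_⟩
  · rw [hkey]
    exact (((Matrix.isUnit_iff_isUnit_det q).mpr hqd).mul hS).mul
      ((Matrix.isUnit_iff_isUnit_det _).mpr (Matrix.isUnit_nonsing_inv_det q hqd))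
  · have hXinv : (q * X * q⁻¹)⁻¹ = q * X⁻¹ * q⁻¹ := by
      rw [Matrix.mul_inv_rev, Matrix.mul_inv_rev, Matrix.nonsing_inv_nonsing_inv q hqd,
        Matrix.mul_assoc]
    have hprod : g.toBlocks₁₂ * q⁻¹ * T * (q * X⁻¹ * q⁻¹) * (q * g.toBlocks₂₁)
        = g.toBlocks₁₂ * T * X⁻¹ * g.toBlocks₂₁ := by
      calc g.toBlocks₁₂ * q⁻¹ * T * (q * X⁻¹ * q⁻¹) * (q * g.toBlocks₂₁)
          = g.toBlocks₁₂ * (q⁻¹ * T * q) * X⁻¹ * (q⁻¹ * q) * g.toBlocks₂₁ := by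
            simp only [Matrix.mul_assoc]
        _ = g.toBlocks₁₂ * T * X⁻¹ * g.toBlocks₂₁ := by
            rw [hcomm', Matrix.mul_assoc T, hqq']; simp only [Matrix.mul_one]
    rw [chiM, chiM, hb11, hb12, hb21, hkey, hXinv, ← hT, hprod]
end

section
/- Let g be a complex matrix of size α+mN with blocks a, b, c, d, and let I_N g denote its image in matrices of size α+m(N+1) (acting as g on ℂ^α ⊕ (ℂ^m ⊗ ℂ^N) and as the identity on ℂ^m ⊗ ℂ^1). Then for every m×m complex matrix S such that 1 - d·(S ⊗ 1_N) is invertible, the corresponding matrix 1 - d'·(S ⊗ 1_{N+1}) for I_N g is invertible if and only if 1 - S is invertible, and in that case χ_{I_N g}(S) = χ_g(S). -/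
open Matrix
open scoped Kronecker

/-- The embedding `I_N`: `g` of size `α + mN` extended by the identity on `ℂ^m ⊗ ℂ`. -/
noncomputable def embI {A V NN : Type*} [DecidableEq A] [DecidableEq V] [DecidableEq NN]
    (g : Matrix (A ⊕ V × NN) (A ⊕ V × NN) ℂ) :
    Matrix (A ⊕ V × (NN ⊕ Fin 1)) (A ⊕ V × (NN ⊕ Fin 1)) ℂ :=
  tildeG (N₂ := Fin 1) g

/-- behaviour of the characteristic function under `I_N`. -/
theorem chi_embI (α m N : ℕ) (hm : 1 ≤ m) (hN : 1 ≤ N)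
    (g : Matrix (Fin α ⊕ Fin m × Fin N) (Fin α ⊕ Fin m × Fin N) ℂ)
    (S : Matrix (Fin m) (Fin m) ℂ)
    (hS : IsUnit ((1 : Matrix (Fin m × Fin N) (Fin m × Fin N) ℂ) -
      g.toBlocks₂₂ * (S ⊗ₖ (1 : Matrix (Fin N) (Fin N) ℂ)))) :
    (IsUnit ((1 : Matrix (Fin m × (Fin N ⊕ Fin 1)) (Fin m × (Fin N ⊕ Fin 1)) ℂ) -
        (embI g).toBlocks₂₂ * (S ⊗ₖ (1 : Matrix (Fin N ⊕ Fin 1) (Fin N ⊕ Fin 1) ℂ))) ↔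
      IsUnit ((1 : Matrix (Fin m) (Fin m) ℂ) - S)) ∧
    (IsUnit ((1 : Matrix (Fin m) (Fin m) ℂ) - S) → chiM (embI g) S = chiM g S) := by
  classical
  let e : (Fin m × (Fin N ⊕ Fin 1)) ≃ ((Fin m × Fin N) ⊕ (Fin m × Fin 1)) :=
    Equiv.prodSumDistrib (Fin m) (Fin N) (Fin 1)
  let f : (Fin m × Fin 1) ≃ Fin m := Equiv.prodUnique (Fin m) (Fin 1)
  have h11 : (embI g).toBlocks₁₁ = g.toBlocks₁₁ := by
    ext i j
    simp [embI, tildeG, sumEquivL, Matrix.toBlocks₁₁]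
  have h12 : (embI g).toBlocks₁₂ =
      (Matrix.fromCols g.toBlocks₁₂ 0).submatrix id ⇑e := by
    ext i ⟨w, q⟩
    rcases q with n | k <;>
      simp [embI, tildeG, sumEquivL, Matrix.toBlocks₁₂, e]
  have h21 : (embI g).toBlocks₂₁ =
      (Matrix.fromRows g.toBlocks₂₁ 0).submatrix ⇑e id := by
    ext ⟨v, p⟩ j
    rcases p with n | k <;>
      simp [embI, tildeG, sumEquivL, Matrix.toBlocks₂₁, e]
  have h22 : (embI g).toBlocks₂₂ =
      (Matrix.fromBlocks g.toBlocks₂₂ 0 0 1).submatrix ⇑e ⇑e := by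
    ext ⟨v, p⟩ ⟨w, q⟩
    rcases p with n | k <;> rcases q with n' | k' <;>
      simp [embI, tildeG, sumEquivL, Matrix.toBlocks₂₂, e, Matrix.one_apply, Prod.ext_iff]
  have hk : (S ⊗ₖ (1 : Matrix (Fin N ⊕ Fin 1) (Fin N ⊕ Fin 1) ℂ)) =
      (Matrix.fromBlocks (S ⊗ₖ (1 : Matrix (Fin N) (Fin N) ℂ)) 0 0
        (S ⊗ₖ (1 : Matrix (Fin 1) (Fin 1) ℂ))).submatrix ⇑e ⇑e := by
    ext ⟨v, p⟩ ⟨w, q⟩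
    rcases p with n | k <;> rcases q with n' | k' <;>
      simp [e, Matrix.one_apply]
  have hM : (1 : Matrix (Fin m × (Fin N ⊕ Fin 1)) (Fin m × (Fin N ⊕ Fin 1)) ℂ) -
      (embI g).toBlocks₂₂ * (S ⊗ₖ (1 : Matrix (Fin N ⊕ Fin 1) (Fin N ⊕ Fin 1) ℂ)) =
      (Matrix.fromBlocks
        ((1 : Matrix (Fin m × Fin N) (Fin m × Fin N) ℂ) -
          g.toBlocks₂₂ * (S ⊗ₖ (1 : Matrix (Fin N) (Fin N) ℂ))) 0 0
        ((1 : Matrix (Fin m × Fin 1) (Fin m × Fin 1) ℂ) -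
          S ⊗ₖ (1 : Matrix (Fin 1) (Fin 1) ℂ))).submatrix ⇑e ⇑e := by
    have hsub : ∀ (X Y : Matrix ((Fin m × Fin N) ⊕ (Fin m × Fin 1))
        ((Fin m × Fin N) ⊕ (Fin m × Fin 1)) ℂ),
        X.submatrix ⇑e ⇑e - Y.submatrix ⇑e ⇑e = (X - Y).submatrix ⇑e ⇑e := fun X Y => rfl
    rw [h22, hk, Matrix.submatrix_mul_equiv, ← Matrix.submatrix_one_equiv e, hsub]
    refine congrArg (fun X : Matrix ((Fin m × Fin N) ⊕ (Fin m × Fin 1))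
        ((Fin m × Fin N) ⊕ (Fin m × Fin 1)) ℂ => X.submatrix ⇑e ⇑e) ?_
    rw [Matrix.fromBlocks_multiply, ← Matrix.fromBlocks_one]
    ext (i | i) (j | j) <;> simp [Matrix.one_apply]
  have key : ∀ (M : Matrix ((Fin m × Fin N) ⊕ (Fin m × Fin 1))
      ((Fin m × Fin N) ⊕ (Fin m × Fin 1)) ℂ), IsUnit (M.submatrix ⇑e ⇑e) ↔ IsUnit M := by
    intro M
    rw [Matrix.isUnit_iff_isUnit_det, Matrix.isUnit_iff_isUnit_det,
      Matrix.det_submatrix_equiv_self]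
  have hS1eq : (1 : Matrix (Fin m × Fin 1) (Fin m × Fin 1) ℂ) -
      S ⊗ₖ (1 : Matrix (Fin 1) (Fin 1) ℂ) =
      ((1 : Matrix (Fin m) (Fin m) ℂ) - S).submatrix ⇑f ⇑f := by
    ext ⟨v, i⟩ ⟨w, j⟩
    fin_cases i <;> fin_cases j <;>
      simp [f, Matrix.one_apply, Prod.ext_iff]
  have hQiff : IsUnit ((1 : Matrix (Fin m × Fin 1) (Fin m × Fin 1) ℂ) -
      S ⊗ₖ (1 : Matrix (Fin 1) (Fin 1) ℂ)) ↔ IsUnit ((1 : Matrix (Fin m) (Fin m) ℂ) - S) := by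
    rw [hS1eq, Matrix.isUnit_iff_isUnit_det, Matrix.isUnit_iff_isUnit_det,
      Matrix.det_submatrix_equiv_self]
  constructor
  · rw [hM, key, Matrix.isUnit_fromBlocks_zero₁₂]
    constructor
    · exact fun h => hQiff.mp h.2
    · exact fun h => ⟨hS, hQiff.mpr h⟩
  · intro hU
    have hQ := hQiff.mpr hU
    have hinv : ((1 : Matrix (Fin m × (Fin N ⊕ Fin 1)) (Fin m × (Fin N ⊕ Fin 1)) ℂ) -
        (embI g).toBlocks₂₂ * (S ⊗ₖ (1 : Matrix (Fin N ⊕ Fin 1) (Fin N ⊕ Fin 1) ℂ)))⁻¹ =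
        (Matrix.fromBlocks
          ((1 : Matrix (Fin m × Fin N) (Fin m × Fin N) ℂ) -
            g.toBlocks₂₂ * (S ⊗ₖ (1 : Matrix (Fin N) (Fin N) ℂ)))⁻¹ 0 0
          ((1 : Matrix (Fin m × Fin 1) (Fin m × Fin 1) ℂ) -
            S ⊗ₖ (1 : Matrix (Fin 1) (Fin 1) ℂ))⁻¹).submatrix ⇑e ⇑e := by
      rw [hM, Matrix.inv_submatrix_equiv,
        Matrix.inv_fromBlocks_zero₂₁_of_isUnit_iff _ _ _ (iff_of_true hS hQ)]
      simp
    unfold chiM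
    rw [h11, h12, h21, hinv, hk,
      ← Matrix.submatrix_mul _ _ id ⇑e ⇑e e.bijective,
      ← Matrix.submatrix_mul _ _ id ⇑e ⇑e e.bijective,
      ← Matrix.submatrix_mul _ _ id ⇑e id e.bijective,
      Matrix.submatrix_id_id,
      Matrix.fromCols_mul_fromBlocks, Matrix.fromCols_mul_fromBlocks,
      Matrix.fromCols_mul_fromRows]
    simp
end

section
/- Let g be a complex matrix of size α+mN₁ and h a complex matrix of size α+mN₂, with lower-right blocks d_g and d_h respectively, and let S be an m×m complex matrix such that both 1 - d_g·(S ⊗ 1_{N₁}) and 1 - d_h·(S ⊗ 1_{N₂}) are invertible. Then for the product g ∘ h, of size α+m(N₁+N₂), the matrix 1 - d_{g∘h}·(S ⊗ 1_{N₁+N₂}) is invertible and the characteristic functions multiply: χ_{g∘h}(S) = χ_g(S) · χ_h(S). -/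
open Matrix
open scoped Kronecker

section Aux

variable {A V N₁ N₂ : Type*} [DecidableEq A] [DecidableEq V] [DecidableEq N₁] [DecidableEq N₂]
  [Fintype A] [Fintype V] [Fintype N₁] [Fintype N₂]

/-- The equivalence `A ⊕ V × (N₁ ⊕ N₂) ≃ A ⊕ ((V × N₁) ⊕ (V × N₂))`. -/
def tE (A V N₁ N₂ : Type*) : (A ⊕ V × (N₁ ⊕ N₂)) ≃ (A ⊕ ((V × N₁) ⊕ (V × N₂))) :=
  (Equiv.refl A).sumCongr (Equiv.prodSumDistrib V N₁ N₂)

lemma tilde_eq (g : Matrix (A ⊕ V × N₁) (A ⊕ V × N₁) ℂ) :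
    tildeG (N₂ := N₂) g =
      (Matrix.fromBlocks g.toBlocks₁₁ (Matrix.fromCols g.toBlocks₁₂ 0)
        (Matrix.fromRows g.toBlocks₂₁ 0)
        (Matrix.fromBlocks g.toBlocks₂₂ 0 0 1)).submatrix (tE A V N₁ N₂) (tE A V N₁ N₂) := by
  ext i j
  obtain ⟨p, rfl⟩ := (sumEquivL A V N₁ N₂).surjective i
  obtain ⟨q, rfl⟩ := (sumEquivL A V N₁ N₂).surjective j
  rcases p with (a | w₁) | w₂ <;> rcases q with (a' | w₁') | w₂' <;>
    simp [tildeG, sumEquivL, tE, Matrix.toBlocks₁₁, Matrix.toBlocks₁₂, Matrix.toBlocks₂₁,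
      Matrix.toBlocks₂₂, Matrix.fromBlocks, Matrix.fromCols, Matrix.fromRows,
      Matrix.one_apply, Matrix.submatrix_apply, Equiv.sumCongr_apply, Prod.ext_iff] <;>
    rfl

lemma hat_eq (h : Matrix (A ⊕ V × N₂) (A ⊕ V × N₂) ℂ) :
    hatH (N₁ := N₁) h =
      (Matrix.fromBlocks h.toBlocks₁₁ (Matrix.fromCols 0 h.toBlocks₁₂)
        (Matrix.fromRows 0 h.toBlocks₂₁)
        (Matrix.fromBlocks 1 0 0 h.toBlocks₂₂)).submatrix (tE A V N₁ N₂) (tE A V N₁ N₂) := by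
  ext i j
  obtain ⟨p, rfl⟩ := (sumEquivR A V N₁ N₂).surjective i
  obtain ⟨q, rfl⟩ := (sumEquivR A V N₁ N₂).surjective j
  rcases p with (a | w₂) | w₁ <;> rcases q with (a' | w₂') | w₁' <;>
    simp [hatH, sumEquivR, tE, Matrix.toBlocks₁₁, Matrix.toBlocks₁₂, Matrix.toBlocks₂₁,
      Matrix.toBlocks₂₂, Matrix.fromBlocks, Matrix.fromCols, Matrix.fromRows,
      Matrix.one_apply, Matrix.submatrix_apply, Equiv.sumCongr_apply, Prod.ext_iff] <;>
    rfl

lemma kron_one_sum (S : Matrix V V ℂ) :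
    (S ⊗ₖ (1 : Matrix (N₁ ⊕ N₂) (N₁ ⊕ N₂) ℂ)) =
      (Matrix.fromBlocks (S ⊗ₖ (1 : Matrix N₁ N₁ ℂ)) 0 0
        (S ⊗ₖ (1 : Matrix N₂ N₂ ℂ))).submatrix
        (Equiv.prodSumDistrib V N₁ N₂) (Equiv.prodSumDistrib V N₁ N₂) := by
  ext ⟨v, n⟩ ⟨v', n'⟩
  rcases n with n | n <;> rcases n' with n' | n' <;>
    simp [Matrix.one_apply, Matrix.kroneckerMap_apply]

set_option linter.unusedSectionVars false in
lemma subTE_toBlocks₁₁ (M : Matrix (A ⊕ ((V × N₁) ⊕ (V × N₂))) (A ⊕ ((V × N₁) ⊕ (V × N₂))) ℂ) :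
    (M.submatrix ⇑(tE A V N₁ N₂) ⇑(tE A V N₁ N₂)).toBlocks₁₁ = M.toBlocks₁₁ := rfl

set_option linter.unusedSectionVars false in
lemma subTE_toBlocks₁₂ (M : Matrix (A ⊕ ((V × N₁) ⊕ (V × N₂))) (A ⊕ ((V × N₁) ⊕ (V × N₂))) ℂ) :
    (M.submatrix ⇑(tE A V N₁ N₂) ⇑(tE A V N₁ N₂)).toBlocks₁₂ =
      M.toBlocks₁₂.submatrix id ⇑(Equiv.prodSumDistrib V N₁ N₂) := rfl

set_option linter.unusedSectionVars false in
lemma subTE_toBlocks₂₁ (M : Matrix (A ⊕ ((V × N₁) ⊕ (V × N₂))) (A ⊕ ((V × N₁) ⊕ (V × N₂))) ℂ) :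
    (M.submatrix ⇑(tE A V N₁ N₂) ⇑(tE A V N₁ N₂)).toBlocks₂₁ =
      M.toBlocks₂₁.submatrix ⇑(Equiv.prodSumDistrib V N₁ N₂) id := rfl

set_option linter.unusedSectionVars false in
lemma subTE_toBlocks₂₂ (M : Matrix (A ⊕ ((V × N₁) ⊕ (V × N₂))) (A ⊕ ((V × N₁) ⊕ (V × N₂))) ℂ) :
    (M.submatrix ⇑(tE A V N₁ N₂) ⇑(tE A V N₁ N₂)).toBlocks₂₂ =
      M.toBlocks₂₂.submatrix ⇑(Equiv.prodSumDistrib V N₁ N₂) ⇑(Equiv.prodSumDistrib V N₁ N₂) :=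
  rfl

/-- The blocks of the ∘-product. -/
lemma circM_eq (g : Matrix (A ⊕ V × N₁) (A ⊕ V × N₁) ℂ)
    (h : Matrix (A ⊕ V × N₂) (A ⊕ V × N₂) ℂ) :
    circM g h =
      (Matrix.fromBlocks (g.toBlocks₁₁ * h.toBlocks₁₁)
        (Matrix.fromCols g.toBlocks₁₂ (g.toBlocks₁₁ * h.toBlocks₁₂))
        (Matrix.fromRows (g.toBlocks₂₁ * h.toBlocks₁₁) h.toBlocks₂₁)
        (Matrix.fromBlocks g.toBlocks₂₂ (g.toBlocks₂₁ * h.toBlocks₁₂) 0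
          h.toBlocks₂₂)).submatrix (tE A V N₁ N₂) (tE A V N₁ N₂) := by
  rw [circM, tilde_eq, hat_eq,
    Matrix.submatrix_mul_equiv _ _ _ (tE A V N₁ N₂) _]
  simp [Matrix.fromBlocks_multiply, Matrix.fromCols_mul_fromRows,
    Matrix.mul_fromCols, Matrix.fromCols_mul_fromBlocks,
    Matrix.fromBlocks_mul_fromRows, Matrix.fromRows_mul_fromCols,
    Matrix.fromBlocks_add]
  ext (i | ⟨v, (n | n)⟩) (j | ⟨v', (n' | n')⟩) <;> simp [tE]


end Aux


/-- multiplicativity of characteristic functions,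
`χ_{g∘h}(S) = χ_g(S) · χ_h(S)`. -/
theorem chi_circ_mul (α m N₁ N₂ : ℕ) (hm : 1 ≤ m) (hN₁ : 1 ≤ N₁) (hN₂ : 1 ≤ N₂)
    (g : Matrix (Fin α ⊕ Fin m × Fin N₁) (Fin α ⊕ Fin m × Fin N₁) ℂ)
    (h : Matrix (Fin α ⊕ Fin m × Fin N₂) (Fin α ⊕ Fin m × Fin N₂) ℂ)
    (S : Matrix (Fin m) (Fin m) ℂ)
    (hg : IsUnit ((1 : Matrix (Fin m × Fin N₁) (Fin m × Fin N₁) ℂ) -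
      g.toBlocks₂₂ * (S ⊗ₖ (1 : Matrix (Fin N₁) (Fin N₁) ℂ))))
    (hh : IsUnit ((1 : Matrix (Fin m × Fin N₂) (Fin m × Fin N₂) ℂ) -
      h.toBlocks₂₂ * (S ⊗ₖ (1 : Matrix (Fin N₂) (Fin N₂) ℂ)))) :
    IsUnit ((1 : Matrix (Fin m × (Fin N₁ ⊕ Fin N₂)) (Fin m × (Fin N₁ ⊕ Fin N₂)) ℂ) -
        (circM g h).toBlocks₂₂ *
          (S ⊗ₖ (1 : Matrix (Fin N₁ ⊕ Fin N₂) (Fin N₁ ⊕ Fin N₂) ℂ))) ∧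
      chiM (circM g h) S = chiM g S * chiM h S := by
  classical
  set e := Equiv.prodSumDistrib (Fin m) (Fin N₁) (Fin N₂) with he
  set a₁ := g.toBlocks₁₁ with ha₁
  set b₁ := g.toBlocks₁₂ with hb₁
  set c₁ := g.toBlocks₂₁ with hc₁
  set d₁ := g.toBlocks₂₂ with hd₁
  set a₂ := h.toBlocks₁₁ with ha₂
  set b₂ := h.toBlocks₁₂ with hb₂
  set c₂ := h.toBlocks₂₁ with hc₂
  set d₂ := h.toBlocks₂₂ with hd₂
  set S₁ := S ⊗ₖ (1 : Matrix (Fin N₁) (Fin N₁) ℂ) with hS₁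
  set S₂ := S ⊗ₖ (1 : Matrix (Fin N₂) (Fin N₂) ℂ) with hS₂
  set X := ((1 : Matrix (Fin m × Fin N₁) (Fin m × Fin N₁) ℂ) - d₁ * S₁)⁻¹ with hXdef
  set Y := ((1 : Matrix (Fin m × Fin N₂) (Fin m × Fin N₂) ℂ) - d₂ * S₂)⁻¹ with hYdef
  have hDet1 : IsUnit ((1 : Matrix (Fin m × Fin N₁) (Fin m × Fin N₁) ℂ) - d₁ * S₁).det :=
    (Matrix.isUnit_iff_isUnit_det _).mp hg
  have hDet2 : IsUnit ((1 : Matrix (Fin m × Fin N₂) (Fin m × Fin N₂) ℂ) - d₂ * S₂).det :=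
    (Matrix.isUnit_iff_isUnit_det _).mp hh
  have hX : ((1 : Matrix (Fin m × Fin N₁) (Fin m × Fin N₁) ℂ) - d₁ * S₁) * X = 1 :=
    Matrix.mul_nonsing_inv _ hDet1
  have hY : ((1 : Matrix (Fin m × Fin N₂) (Fin m × Fin N₂) ℂ) - d₂ * S₂) * Y = 1 :=
    Matrix.mul_nonsing_inv _ hDet2
  have hc := circM_eq g h
  -- the blocks of `circM g h`
  have h11 : (circM g h).toBlocks₁₁ = a₁ * a₂ := by
    rw [hc, subTE_toBlocks₁₁, Matrix.toBlocks_fromBlocks₁₁]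
  have h12 : (circM g h).toBlocks₁₂ =
      (Matrix.fromCols b₁ (a₁ * b₂)).submatrix id ⇑e := by
    rw [hc, subTE_toBlocks₁₂, Matrix.toBlocks_fromBlocks₁₂]
  have h21 : (circM g h).toBlocks₂₁ =
      (Matrix.fromRows (c₁ * a₂) c₂).submatrix ⇑e id := by
    rw [hc, subTE_toBlocks₂₁, Matrix.toBlocks_fromBlocks₂₁]
  have h22 : (circM g h).toBlocks₂₂ =
      (Matrix.fromBlocks d₁ (c₁ * b₂) 0 d₂).submatrix ⇑e ⇑e := by
    rw [hc, subTE_toBlocks₂₂, Matrix.toBlocks_fromBlocks₂₂]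
  set D := Matrix.fromBlocks
      ((1 : Matrix (Fin m × Fin N₁) (Fin m × Fin N₁) ℂ) - d₁ * S₁)
      (-(c₁ * b₂ * S₂)) 0
      ((1 : Matrix (Fin m × Fin N₂) (Fin m × Fin N₂) ℂ) - d₂ * S₂) with hD
  have key : (1 : Matrix (Fin m × (Fin N₁ ⊕ Fin N₂)) (Fin m × (Fin N₁ ⊕ Fin N₂)) ℂ) -
      (circM g h).toBlocks₂₂ * (S ⊗ₖ (1 : Matrix (Fin N₁ ⊕ Fin N₂) (Fin N₁ ⊕ Fin N₂) ℂ)) =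
      D.submatrix ⇑e ⇑e := by
    have inner : (1 : Matrix ((Fin m × Fin N₁) ⊕ (Fin m × Fin N₂))
          ((Fin m × Fin N₁) ⊕ (Fin m × Fin N₂)) ℂ) -
        (Matrix.fromBlocks d₁ (c₁ * b₂) 0 d₂) * (Matrix.fromBlocks S₁ 0 0 S₂) = D := by
      rw [Matrix.fromBlocks_multiply, ← Matrix.fromBlocks_one, hD]
      ext (p | p) (q | q) <;> simp [Matrix.fromBlocks, Matrix.sub_apply]
    rw [h22, kron_one_sum, Matrix.submatrix_mul_equiv _ _ _ e _, ← inner]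
    ext p q
    simp [Matrix.sub_apply, Matrix.submatrix_apply, Matrix.one_apply,
      EmbeddingLike.apply_eq_iff_eq]
    rfl
  have hUnit : IsUnit ((1 : Matrix (Fin m × (Fin N₁ ⊕ Fin N₂)) (Fin m × (Fin N₁ ⊕ Fin N₂)) ℂ) -
      (circM g h).toBlocks₂₂ *
        (S ⊗ₖ (1 : Matrix (Fin N₁ ⊕ Fin N₂) (Fin N₁ ⊕ Fin N₂) ℂ))) := by
    rw [key, Matrix.isUnit_iff_isUnit_det, Matrix.det_submatrix_equiv_self, hD,
      Matrix.det_fromBlocks_zero₂₁]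
    exact hDet1.mul hDet2
  refine ⟨hUnit, ?_⟩
  set Z := Matrix.fromBlocks X (X * (c₁ * b₂ * S₂) * Y) 0 Y with hZdef
  have hDZ : D * Z = 1 := by
    have haux : ((1 : Matrix (Fin m × Fin N₁) (Fin m × Fin N₁) ℂ) - d₁ * S₁) *
        (X * (c₁ * b₂ * S₂) * Y) = (c₁ * b₂ * S₂) * Y := by
      rw [← Matrix.mul_assoc, ← Matrix.mul_assoc, hX, Matrix.one_mul]
    rw [hD, hZdef, Matrix.fromBlocks_multiply, haux, hX, hY]
    simp [Matrix.fromBlocks_one]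
  have hInv : (D.submatrix ⇑e ⇑e)⁻¹ = Z.submatrix ⇑e ⇑e := by
    refine Matrix.inv_eq_right_inv ?_
    rw [Matrix.submatrix_mul_equiv _ _ _ e _, hDZ, Matrix.submatrix_one_equiv]
  rw [chiM, h11, h12, h21, key, hInv, kron_one_sum,
    Matrix.submatrix_mul_equiv _ _ _ e _, Matrix.submatrix_mul_equiv _ _ _ e _,
    Matrix.submatrix_mul_equiv _ _ _ e _, Matrix.submatrix_id_id]
  show a₁ * a₂ + Matrix.fromCols b₁ (a₁ * b₂) *
      Matrix.fromBlocks S₁ 0 0 S₂ * Z * Matrix.fromRows (c₁ * a₂) c₂ = _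
  rw [chiM, chiM, ← ha₁, ← hb₁, ← hc₁, ← hd₁, ← ha₂, ← hb₂, ← hc₂, ← hd₂,
    ← hS₁, ← hS₂, ← hXdef, ← hYdef]
  rw [hZdef, Matrix.fromCols_mul_fromBlocks, Matrix.fromCols_mul_fromBlocks,
    Matrix.fromCols_mul_fromRows]
  simp only [Matrix.mul_zero, Matrix.zero_mul, add_zero, zero_add,
    Matrix.mul_add, Matrix.add_mul, Matrix.mul_assoc]
  abel
end

section
/- Let g be a unitary complex matrix of size α+mN with blocks a, b, c, d, and let S be an m×m complex matrix with operator norm ‖S‖ ≤ 1 such that 1 - d·S̃ is invertible. Then the operator norm of the characteristic function satisfies ‖χ_g(S)‖ ≤ 1. -/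
open Matrix
open scoped Kronecker

/-- `M` is unitary: `M M* = M* M = 1`. -/
def IsUnitaryM {ι : Type*} [Fintype ι] [DecidableEq ι] (M : Matrix ι ι ℂ) : Prop :=
  M * Mᴴ = 1 ∧ Mᴴ * M = 1

/-- The ℓ²-operator norm of a square complex matrix. -/
noncomputable def l2OpNorm {ι : Type*} [Fintype ι] [DecidableEq ι]
    (M : Matrix ι ι ℂ) : ℝ :=
  ‖Matrix.toEuclideanCLM (𝕜 := ℂ) M‖

section Aux
lemma dot_self_eq {ι : Type*} [Fintype ι] (v : ι → ℂ) :
    star v ⬝ᵥ v = ((∑ i, ‖v i‖ ^ 2 : ℝ) : ℂ) := by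
  push_cast
  simp [dotProduct, Pi.star_apply, RCLike.star_def, RCLike.conj_mul]

lemma unitary_sum_sq {ι : Type*} [Fintype ι] [DecidableEq ι] (M : Matrix ι ι ℂ)
    (hM : Mᴴ * M = 1) (u : ι → ℂ) :
    ∑ i, ‖(M *ᵥ u) i‖ ^ 2 = ∑ i, ‖u i‖ ^ 2 := by
  have key : star (M *ᵥ u) ⬝ᵥ (M *ᵥ u) = star u ⬝ᵥ u := by
    rw [Matrix.star_mulVec, Matrix.dotProduct_mulVec, Matrix.vecMul_vecMul, hM,
      Matrix.vecMul_one]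
  rw [dot_self_eq, dot_self_eq] at key
  exact_mod_cast key

lemma euc_norm_symm {ι : Type*} [Fintype ι] (v : ι → ℂ) :
    ‖(WithLp.equiv 2 (ι → ℂ)).symm v‖ = Real.sqrt (∑ i, ‖v i‖ ^ 2) := by
  rw [EuclideanSpace.norm_eq]; rfl

lemma mulVec_sqrt_le {ι : Type*} [Fintype ι] [DecidableEq ι] (M : Matrix ι ι ℂ) (x : ι → ℂ) :
    Real.sqrt (∑ i, ‖(M *ᵥ x) i‖ ^ 2) ≤ l2OpNorm M * Real.sqrt (∑ i, ‖x i‖ ^ 2) := by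
  have h := (Matrix.toEuclideanCLM (𝕜 := ℂ) M).le_opNorm ((WithLp.equiv 2 (ι → ℂ)).symm x)
  rw [WithLp.equiv_symm_apply, Matrix.toEuclideanCLM_toLp, ← WithLp.equiv_symm_apply,
    euc_norm_symm, euc_norm_symm] at h
  exact h

lemma mulVec_sq_le {ι : Type*} [Fintype ι] [DecidableEq ι] (M : Matrix ι ι ℂ) (x : ι → ℂ) :
    ∑ i, ‖(M *ᵥ x) i‖ ^ 2 ≤ l2OpNorm M ^ 2 * ∑ i, ‖x i‖ ^ 2 := by
  have h1 : (0:ℝ) ≤ ∑ i, ‖(M *ᵥ x) i‖ ^ 2 := Finset.sum_nonneg fun i _ => sq_nonneg _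
  have h2 : (0:ℝ) ≤ ∑ i, ‖x i‖ ^ 2 := Finset.sum_nonneg fun i _ => sq_nonneg _
  have h := mulVec_sqrt_le M x
  calc ∑ i, ‖(M *ᵥ x) i‖ ^ 2 = Real.sqrt (∑ i, ‖(M *ᵥ x) i‖ ^ 2) ^ 2 := (Real.sq_sqrt h1).symm
    _ ≤ (l2OpNorm M * Real.sqrt (∑ i, ‖x i‖ ^ 2)) ^ 2 :=
        pow_le_pow_left₀ (Real.sqrt_nonneg _) h 2
    _ = l2OpNorm M ^ 2 * ∑ i, ‖x i‖ ^ 2 := by rw [mul_pow, Real.sq_sqrt h2]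

lemma kron_mulVec_apply {V NN : Type*} [Fintype V] [Fintype NN] [DecidableEq V] [DecidableEq NN]
    (S : Matrix V V ℂ) (v : V × NN → ℂ) (i : V) (k : NN) :
    ((S ⊗ₖ (1 : Matrix NN NN ℂ)) *ᵥ v) (i, k) = (S *ᵥ fun j => v (j, k)) i := by
  simp [Matrix.mulVec, dotProduct, Fintype.sum_prod_type, Matrix.one_apply,
    ite_mul, mul_ite, Finset.sum_ite_eq, Finset.sum_ite_eq']

lemma kron_sq_le {V NN : Type*} [Fintype V] [Fintype NN] [DecidableEq V] [DecidableEq NN]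
    (S : Matrix V V ℂ) (v : V × NN → ℂ) :
    ∑ p, ‖((S ⊗ₖ (1 : Matrix NN NN ℂ)) *ᵥ v) p‖ ^ 2 ≤ l2OpNorm S ^ 2 * ∑ p, ‖v p‖ ^ 2 := by
  calc ∑ p : V × NN, ‖((S ⊗ₖ (1 : Matrix NN NN ℂ)) *ᵥ v) p‖ ^ 2
      = ∑ k : NN, ∑ i : V, ‖(S *ᵥ fun j => v (j, k)) i‖ ^ 2 := by
        rw [Fintype.sum_prod_type, Finset.sum_comm]
        simp only [kron_mulVec_apply]
    _ ≤ ∑ k : NN, l2OpNorm S ^ 2 * ∑ j : V, ‖v (j, k)‖ ^ 2 :=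
        Finset.sum_le_sum fun k _ => mulVec_sq_le S _
    _ = l2OpNorm S ^ 2 * ∑ p : V × NN, ‖v p‖ ^ 2 := by
        rw [← Finset.mul_sum, Fintype.sum_prod_type, Finset.sum_comm]
end Aux

/-- for unitary `g` and `‖S‖ ≤ 1`, the characteristic function
satisfies `‖χ_g(S)‖ ≤ 1`. -/
theorem chi_norm_le_one (α m N : ℕ) (hm : 1 ≤ m) (hN : 1 ≤ N)
    (g : Matrix (Fin α ⊕ Fin m × Fin N) (Fin α ⊕ Fin m × Fin N) ℂ)
    (hg : IsUnitaryM g)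
    (S : Matrix (Fin m) (Fin m) ℂ) (hSnorm : l2OpNorm S ≤ 1)
    (hS : IsUnit ((1 : Matrix (Fin m × Fin N) (Fin m × Fin N) ℂ) -
      g.toBlocks₂₂ * (S ⊗ₖ (1 : Matrix (Fin N) (Fin N) ℂ)))) :
    l2OpNorm (chiM g S) ≤ 1 := by
  set T : Matrix (Fin m × Fin N) (Fin m × Fin N) ℂ := S ⊗ₖ (1 : Matrix (Fin N) (Fin N) ℂ)
  set E : Matrix (Fin m × Fin N) (Fin m × Fin N) ℂ := 1 - g.toBlocks₂₂ * T with hE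
  have hEinv : E * E⁻¹ = 1 :=
    Matrix.mul_nonsing_inv _ ((Matrix.isUnit_iff_isUnit_det _).mp hS)
  -- pointwise bound
  have key : ∀ x : Fin α → ℂ,
      ∑ i, ‖((chiM g S) *ᵥ x) i‖ ^ 2 ≤ ∑ i, ‖x i‖ ^ 2 := by
    intro x
    set v : Fin m × Fin N → ℂ := E⁻¹ *ᵥ (g.toBlocks₂₁ *ᵥ x) with hv
    set w : Fin m × Fin N → ℂ := T *ᵥ v with hw
    have hEv : E *ᵥ v = g.toBlocks₂₁ *ᵥ x := by
      rw [hv, Matrix.mulVec_mulVec, hEinv, Matrix.one_mulVec]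
    have hcv : g.toBlocks₂₁ *ᵥ x + g.toBlocks₂₂ *ᵥ w = v := by
      have : v - g.toBlocks₂₂ *ᵥ w = g.toBlocks₂₁ *ᵥ x := by
        rw [← hEv, hE, Matrix.sub_mulVec, Matrix.one_mulVec, hw, Matrix.mulVec_mulVec]
      rw [← this]; abel
    have hchi : (chiM g S) *ᵥ x = g.toBlocks₁₁ *ᵥ x + g.toBlocks₁₂ *ᵥ w := by
      rw [chiM, Matrix.add_mulVec]
      congr 1
      rw [hw, hv]
      simp only [← Matrix.mulVec_mulVec, Matrix.mul_assoc]
      rfl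
    have hgmul : g *ᵥ Sum.elim x w = Sum.elim ((chiM g S) *ᵥ x) v := by
      conv_lhs => rw [← Matrix.fromBlocks_toBlocks g]
      rw [Matrix.fromBlocks_mulVec]
      simp only [Sum.elim_comp_inl, Sum.elim_comp_inr]
      rw [hchi, hcv]
    have hsum := unitary_sum_sq g hg.2 (Sum.elim x w)
    rw [hgmul] at hsum
    rw [Fintype.sum_sum_type, Fintype.sum_sum_type] at hsum
    simp only [Sum.elim_inl, Sum.elim_inr] at hsum
    have hwv : ∑ p, ‖w p‖ ^ 2 ≤ ∑ p, ‖v p‖ ^ 2 := by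
      have h1 := kron_sq_le S v
      have h2 : l2OpNorm S ^ 2 ≤ 1 := by
        have hn : (0:ℝ) ≤ l2OpNorm S := norm_nonneg _
        nlinarith [hSnorm, hn]
      have h3 : (0:ℝ) ≤ ∑ p, ‖v p‖ ^ 2 := Finset.sum_nonneg fun i _ => sq_nonneg _
      calc ∑ p, ‖w p‖ ^ 2 ≤ l2OpNorm S ^ 2 * ∑ p, ‖v p‖ ^ 2 := by rw [hw]; exact h1
        _ ≤ 1 * ∑ p, ‖v p‖ ^ 2 := mul_le_mul_of_nonneg_right h2 h3
        _ = ∑ p, ‖v p‖ ^ 2 := one_mul _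
    linarith
  -- conclude
  rw [l2OpNorm]
  apply ContinuousLinearMap.opNorm_le_bound _ zero_le_one
  intro y
  have hy : y = (WithLp.equiv 2 (Fin α → ℂ)).symm (WithLp.equiv 2 (Fin α → ℂ) y) :=
    ((WithLp.equiv 2 (Fin α → ℂ)).symm_apply_apply y).symm
  rw [hy, WithLp.equiv_symm_apply, Matrix.toEuclideanCLM_toLp, ← WithLp.equiv_symm_apply,
    euc_norm_symm, euc_norm_symm, one_mul]
  exact Real.sqrt_le_sqrt (key _)
end

section
/- Let g be a unitary complex matrix of size α+mN with blocks a, b, c, d, and let S be a unitary m×m complex matrix such that 1 - d·S̃ is invertible. Then the characteristic function χ_g(S) is a unitary α×α matrix. -/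
open Matrix
open scoped Kronecker

/-- for unitary `g` and unitary `S`, the characteristic function
`χ_g(S)` is unitary. -/

lemma feedback_unitary {p n : Type*} [Fintype p] [Fintype n] [DecidableEq p] [DecidableEq n]
    (A : Matrix p p ℂ) (B : Matrix p n ℂ) (C : Matrix n p ℂ) (D : Matrix n n ℂ)
    (h11 : A * Aᴴ + B * Bᴴ = 1) (h12 : A * Cᴴ + B * Dᴴ = 0)
    (h21 : C * Aᴴ + D * Bᴴ = 0) (h22 : C * Cᴴ + D * Dᴴ = 1)
    (k11 : Aᴴ * A + Cᴴ * C = 1) (k12 : Aᴴ * B + Cᴴ * D = 0)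
    (k22 : Bᴴ * B + Dᴴ * D = 1)
    (hD : IsUnit (1 - D)) :
    IsUnitaryM (A + B * (1 - D)⁻¹ * C) := by
  set E := (1 - D)⁻¹ with hE
  have hdet : IsUnit (1 - D).det := (Matrix.isUnit_iff_isUnit_det _).mp hD
  have hME : (1 - D) * E = 1 := Matrix.mul_nonsing_inv _ hdet
  have hEM : E * (1 - D) = 1 := Matrix.nonsing_inv_mul _ hdet
  have hMF : (1 - Dᴴ) * Eᴴ = 1 := by
    have := congrArg conjTranspose hEM
    simpa [conjTranspose_mul] using this
  have hFM : Eᴴ * (1 - Dᴴ) = 1 := by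
    have := congrArg conjTranspose hME
    simpa [conjTranspose_mul] using this
  have hDE : D * E = E - 1 := by
    calc D * E = E - (1 - D) * E := by noncomm_ring
      _ = E - 1 := by rw [hME]
  have hED : E * D = E - 1 := by
    calc E * D = E - E * (1 - D) := by noncomm_ring
      _ = E - 1 := by rw [hEM]
  have hDF : Dᴴ * Eᴴ = Eᴴ - 1 := by
    calc Dᴴ * Eᴴ = Eᴴ - (1 - Dᴴ) * Eᴴ := by noncomm_ring
      _ = Eᴴ - 1 := by rw [hMF]
  have hFD : Eᴴ * Dᴴ = Eᴴ - 1 := by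
    calc Eᴴ * Dᴴ = Eᴴ - Eᴴ * (1 - Dᴴ) := by noncomm_ring
      _ = Eᴴ - 1 := by rw [hFM]
  have hAC : A * Cᴴ = -(B * Dᴴ) := by rw [← eq_sub_iff_add_eq, zero_sub] at h12; exact h12
  have hCA : C * Aᴴ = -(D * Bᴴ) := by rw [← eq_sub_iff_add_eq, zero_sub] at h21; exact h21
  have hCC : C * Cᴴ = 1 - D * Dᴴ := by rw [← eq_sub_iff_add_eq] at h22; exact h22
  have hAB : Aᴴ * B = -(Cᴴ * D) := by rw [← eq_sub_iff_add_eq, zero_sub] at k12; exact k12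
  have hBA : Bᴴ * A = -(Dᴴ * C) := by
    have := congrArg conjTranspose hAB
    simpa [conjTranspose_mul] using this
  have hBB : Bᴴ * B = 1 - Dᴴ * D := by rw [← eq_sub_iff_add_eq] at k22; exact k22
  -- helper rewrite rules (right-associated forms)
  have wA : ∀ X : Matrix n p ℂ, A * (Cᴴ * X) = -(B * (Dᴴ * X)) := fun X => by
    rw [← Matrix.mul_assoc, hAC, Matrix.neg_mul, Matrix.mul_assoc]
  have wDF : ∀ X : Matrix n p ℂ, Dᴴ * (Eᴴ * X) = Eᴴ * X - X := fun X => by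
    rw [← Matrix.mul_assoc, hDF, Matrix.sub_mul, Matrix.one_mul]
  have wED : ∀ X : Matrix n p ℂ, E * (D * X) = E * X - X := fun X => by
    rw [← Matrix.mul_assoc, hED, Matrix.sub_mul, Matrix.one_mul]
  have wCC : ∀ X : Matrix n p ℂ, C * (Cᴴ * X) = X - D * (Dᴴ * X) := fun X => by
    rw [← Matrix.mul_assoc, hCC, Matrix.sub_mul, Matrix.one_mul, Matrix.mul_assoc]
  have wAB : ∀ X : Matrix n p ℂ, Aᴴ * (B * X) = -(Cᴴ * (D * X)) := fun X => by
    rw [← Matrix.mul_assoc, hAB, Matrix.neg_mul, Matrix.mul_assoc]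
  have wFD : ∀ X : Matrix n p ℂ, Eᴴ * (Dᴴ * X) = Eᴴ * X - X := fun X => by
    rw [← Matrix.mul_assoc, hFD, Matrix.sub_mul, Matrix.one_mul]
  have wDE : ∀ X : Matrix n p ℂ, D * (E * X) = E * X - X := fun X => by
    rw [← Matrix.mul_assoc, hDE, Matrix.sub_mul, Matrix.one_mul]
  have wBB : ∀ X : Matrix n p ℂ, Bᴴ * (B * X) = X - Dᴴ * (D * X) := fun X => by
    rw [← Matrix.mul_assoc, hBB, Matrix.sub_mul, Matrix.one_mul, Matrix.mul_assoc]
  constructor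
  · have expand : (A + B * E * C) * (A + B * E * C)ᴴ = A * Aᴴ + B * Bᴴ := by
      simp only [conjTranspose_add, conjTranspose_mul, Matrix.add_mul, Matrix.mul_add,
        Matrix.mul_assoc, hCA, wA, wDF, wED, wCC, Matrix.mul_sub, Matrix.sub_mul,
        Matrix.mul_neg, Matrix.neg_mul]
      abel
    rw [expand, h11]
  · have expand : (A + B * E * C)ᴴ * (A + B * E * C) = Aᴴ * A + Cᴴ * C := by
      simp only [conjTranspose_add, conjTranspose_mul, Matrix.add_mul, Matrix.mul_add,
        Matrix.mul_assoc, hBA, wAB, wFD, wDE, wBB, Matrix.mul_sub, Matrix.sub_mul,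
        Matrix.mul_neg, Matrix.neg_mul]
      abel
    rw [expand, k11]

theorem chi_unitary (α m N : ℕ) (hm : 1 ≤ m) (hN : 1 ≤ N)
    (g : Matrix (Fin α ⊕ Fin m × Fin N) (Fin α ⊕ Fin m × Fin N) ℂ)
    (hg : IsUnitaryM g)
    (S : Matrix (Fin m) (Fin m) ℂ) (hSu : IsUnitaryM S)
    (hS : IsUnit ((1 : Matrix (Fin m × Fin N) (Fin m × Fin N) ℂ) -
      g.toBlocks₂₂ * (S ⊗ₖ (1 : Matrix (Fin N) (Fin N) ℂ)))) :
    IsUnitaryM (chiM g S) := by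
  obtain ⟨hg1, hg2⟩ := hg
  set a := g.toBlocks₁₁ with ha
  set b := g.toBlocks₁₂ with hb
  set c := g.toBlocks₂₁ with hc
  set d := g.toBlocks₂₂ with hd
  have hgb : g = Matrix.fromBlocks a b c d := (Matrix.fromBlocks_toBlocks g).symm
  rw [hgb, Matrix.fromBlocks_conjTranspose, Matrix.fromBlocks_multiply,
    ← Matrix.fromBlocks_one, Matrix.fromBlocks_inj] at hg1 hg2
  obtain ⟨r11, r12, r21, r22⟩ := hg1
  obtain ⟨s11, s12, s21, s22⟩ := hg2
  set T : Matrix (Fin m × Fin N) (Fin m × Fin N) ℂ := S ⊗ₖ (1 : Matrix (Fin N) (Fin N) ℂ)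
    with hT
  have hTH : Tᴴ = Sᴴ ⊗ₖ (1 : Matrix (Fin N) (Fin N) ℂ) := by
    ext ⟨i, k⟩ ⟨j, l⟩
    simp [hT, Matrix.conjTranspose_apply, Matrix.kroneckerMap_apply, Matrix.one_apply,
      apply_ite (star : ℂ → ℂ), eq_comm]
  have hT1 : T * Tᴴ = 1 := by
    rw [hTH, hT, ← Matrix.mul_kronecker_mul, hSu.1, Matrix.mul_one, Matrix.one_kronecker_one]
  have hT2 : Tᴴ * T = 1 := by
    rw [hTH, hT, ← Matrix.mul_kronecker_mul, hSu.2, Matrix.mul_one, Matrix.one_kronecker_one]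
  have H11 : a * aᴴ + (b * T) * (b * T)ᴴ = 1 := by
    rw [Matrix.conjTranspose_mul, Matrix.mul_assoc b T, ← Matrix.mul_assoc T Tᴴ, hT1,
      Matrix.one_mul]; exact r11
  have H12 : a * cᴴ + (b * T) * (d * T)ᴴ = 0 := by
    rw [Matrix.conjTranspose_mul, Matrix.mul_assoc b T, ← Matrix.mul_assoc T Tᴴ, hT1,
      Matrix.one_mul]; exact r12
  have H21 : c * aᴴ + (d * T) * (b * T)ᴴ = 0 := by
    rw [Matrix.conjTranspose_mul, Matrix.mul_assoc d T, ← Matrix.mul_assoc T Tᴴ, hT1,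
      Matrix.one_mul]; exact r21
  have H22 : c * cᴴ + (d * T) * (d * T)ᴴ = 1 := by
    rw [Matrix.conjTranspose_mul, Matrix.mul_assoc d T, ← Matrix.mul_assoc T Tᴴ, hT1,
      Matrix.one_mul]; exact r22
  have K12 : aᴴ * (b * T) + cᴴ * (d * T) = 0 := by
    rw [← Matrix.mul_assoc, ← Matrix.mul_assoc, ← Matrix.add_mul, s12, Matrix.zero_mul]
  have K22 : (b * T)ᴴ * (b * T) + (d * T)ᴴ * (d * T) = 1 := by
    rw [Matrix.conjTranspose_mul, Matrix.conjTranspose_mul,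
      Matrix.mul_assoc Tᴴ bᴴ, ← Matrix.mul_assoc bᴴ b, Matrix.mul_assoc Tᴴ dᴴ,
      ← Matrix.mul_assoc dᴴ d, ← Matrix.mul_add Tᴴ, ← Matrix.add_mul, s22,
      Matrix.one_mul]; exact hT2
  exact feedback_unitary a (b * T) c (d * T) H11 H12 H21 H22 s11 K12 K22 hS
end

section
/- Let g be a complex matrix of size α+mN₁ with lower-right block d_g and h a complex matrix of size α+mN₂ with lower-right block d_h. Then for every m×m complex matrix S, the polynomial p of the ∘-product multiplies: p_{g∘h}(S) = p_g(S) · p_h(S), i.e. det(1 - d_{g∘h}·(S ⊗ 1_{N₁+N₂})) = det(1 - d_g·(S ⊗ 1_{N₁})) · det(1 - d_h·(S ⊗ 1_{N₂})). -/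
open Matrix
open scoped Kronecker

set_option linter.unusedSectionVars false

section Aux
variable {A V N₁ N₂ : Type*} [DecidableEq A] [DecidableEq V] [DecidableEq N₁] [DecidableEq N₂]
  [Fintype A] [Fintype V] [Fintype N₁] [Fintype N₂]

lemma kron_submatrix (S : Matrix V V ℂ) :
    S ⊗ₖ (1 : Matrix (N₁ ⊕ N₂) (N₁ ⊕ N₂) ℂ) =
      (Matrix.fromBlocks (S ⊗ₖ (1 : Matrix N₁ N₁ ℂ)) 0 0 (S ⊗ₖ (1 : Matrix N₂ N₂ ℂ))).submatrix
        (Equiv.prodSumDistrib V N₁ N₂) (Equiv.prodSumDistrib V N₁ N₂) := by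
  ext ⟨v, n | n⟩ ⟨w, p | p⟩ <;>
    simp [Matrix.submatrix_apply, Matrix.one_apply, Matrix.fromBlocks]

lemma circ_dblock (g : Matrix (A ⊕ V × N₁) (A ⊕ V × N₁) ℂ)
    (h : Matrix (A ⊕ V × N₂) (A ⊕ V × N₂) ℂ) :
    (circM g h).toBlocks₂₂ =
      (Matrix.fromBlocks g.toBlocks₂₂ (g.toBlocks₂₁ * h.toBlocks₁₂) 0 h.toBlocks₂₂).submatrix
        (Equiv.prodSumDistrib V N₁ N₂) (Equiv.prodSumDistrib V N₁ N₂) := by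
  ext ⟨v, n | n⟩ ⟨w, p | p⟩ <;>
    simp [circM, tildeG, hatH, sumEquivL, sumEquivR, Matrix.toBlocks₂₂, Matrix.toBlocks₂₁,
      Matrix.toBlocks₁₂, Matrix.mul_apply, Fintype.sum_sum_type, Fintype.sum_prod_type,
      Matrix.fromBlocks, Matrix.one_apply, ite_and, Finset.sum_ite_eq, Finset.sum_ite_eq']

lemma one_sub_submatrix {n m : Type*} [Fintype n] [Fintype m] [DecidableEq n] [DecidableEq m]
    (e : n ≃ m) (M : Matrix m m ℂ) :
    (1 : Matrix n n ℂ) - M.submatrix e e = ((1 : Matrix m m ℂ) - M).submatrix e e := by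
  ext i j
  simp [Matrix.one_apply, Matrix.sub_apply, Equiv.apply_eq_iff_eq]

end Aux

/-- `p_{g∘h}(S) = p_g(S) · p_h(S)`. -/
theorem p_circ_mul (α m N₁ N₂ : ℕ) (hm : 1 ≤ m) (hN₁ : 1 ≤ N₁) (hN₂ : 1 ≤ N₂)
    (g : Matrix (Fin α ⊕ Fin m × Fin N₁) (Fin α ⊕ Fin m × Fin N₁) ℂ)
    (h : Matrix (Fin α ⊕ Fin m × Fin N₂) (Fin α ⊕ Fin m × Fin N₂) ℂ)
    (S : Matrix (Fin m) (Fin m) ℂ) :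
    pM (circM g h) S = pM g S * pM h S := by
  classical
  rw [pM, circ_dblock, kron_submatrix,
    Matrix.submatrix_mul_equiv _ _ _ (Equiv.prodSumDistrib (Fin m) (Fin N₁) (Fin N₂)) _,
    one_sub_submatrix,
    Matrix.det_submatrix_equiv_self, Matrix.fromBlocks_multiply,
    ← Matrix.fromBlocks_one, sub_eq_add_neg, Matrix.fromBlocks_neg, Matrix.fromBlocks_add]
  simp only [Matrix.mul_zero, Matrix.zero_mul, add_zero, zero_add, neg_zero]
  rw [show ∀ x y : Matrix (Fin m × Fin N₁) (Fin m × Fin N₁) ℂ, x + -y = x - y from fun _ _ => (sub_eq_add_neg _ _).symm,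
    show ∀ x y : Matrix (Fin m × Fin N₂) (Fin m × Fin N₂) ℂ, x + -y = x - y from fun _ _ => (sub_eq_add_neg _ _).symm,
    Matrix.det_fromBlocks_zero₂₁]
  rfl
end

section
/- Let g be a complex matrix of size α+mN with blocks a, b, c, d, and let S be an m×m complex matrix such that 1 - d·S̃ is invertible. Let L ⊆ ℂ^m ⊕ ℂ^m be the graph of S, i.e. L = {(x, Sx) : x ∈ ℂ^m}, and let 𝒳_g(L) ⊆ ℂ^α ⊕ ℂ^α be the set of all pairs (q, p) for which there exist x, y ∈ ℂ^m ⊗ ℂ^N with (x, y) ∈ L ⊗ ℂ^N (i.e. y = (S ⊗ 1_N)x) and (q, x) = g·(p, y). Then 𝒳_g(L) is exactly the graph of the operator χ_g(S): 𝒳_g(L) = {(χ_g(S)·p, p) : p ∈ ℂ^α}. -/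
open Matrix
open scoped Kronecker

/-- the image of the graph of `S` is the graph of `χ_g(S)`. -/
theorem chi_graph (α m N : ℕ) (hm : 1 ≤ m) (hN : 1 ≤ N)
    (g : Matrix (Fin α ⊕ Fin m × Fin N) (Fin α ⊕ Fin m × Fin N) ℂ)
    (S : Matrix (Fin m) (Fin m) ℂ)
    (hS : IsUnit ((1 : Matrix (Fin m × Fin N) (Fin m × Fin N) ℂ) -
      g.toBlocks₂₂ * (S ⊗ₖ (1 : Matrix (Fin N) (Fin N) ℂ)))) :
    {qp : (Fin α → ℂ) × (Fin α → ℂ) |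
        ∃ x y : Fin m × Fin N → ℂ,
          y = (S ⊗ₖ (1 : Matrix (Fin N) (Fin N) ℂ)).mulVec x ∧
          Sum.elim qp.1 x = g.mulVec (Sum.elim qp.2 y)} =
      {qp : (Fin α → ℂ) × (Fin α → ℂ) | qp.1 = (chiM g S).mulVec qp.2} := by
  classical
  have hdet : IsUnit ((1 : Matrix (Fin m × Fin N) (Fin m × Fin N) ℂ) -
      g.toBlocks₂₂ * (S ⊗ₖ (1 : Matrix (Fin N) (Fin N) ℂ))).det :=
    (Matrix.isUnit_iff_isUnit_det _).mp hS
  set St := (S ⊗ₖ (1 : Matrix (Fin N) (Fin N) ℂ)) with hSt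
  set M := (1 : Matrix (Fin m × Fin N) (Fin m × Fin N) ℂ) - g.toBlocks₂₂ * St with hM
  have hMl : M⁻¹ * M = 1 := Matrix.nonsing_inv_mul M hdet
  have hMr : M * M⁻¹ = 1 := Matrix.mul_nonsing_inv M hdet
  ext qp
  simp only [Set.mem_setOf_eq]
  constructor
  · rintro ⟨x, y, hy, hx⟩
    rw [← g.fromBlocks_toBlocks, Matrix.fromBlocks_mulVec] at hx
    have h1 : qp.1 = g.toBlocks₁₁.mulVec qp.2 + g.toBlocks₁₂.mulVec y := by
      funext i; exact congrFun hx (Sum.inl i)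
    have h2 : x = g.toBlocks₂₁.mulVec qp.2 + g.toBlocks₂₂.mulVec y := by
      funext i; exact congrFun hx (Sum.inr i)
    have hxM : M.mulVec x = g.toBlocks₂₁.mulVec qp.2 := by
      rw [hM, Matrix.sub_mulVec, Matrix.one_mulVec, ← Matrix.mulVec_mulVec, ← hy]
      rw [h2]; abel
    have hxv : x = (M⁻¹ * g.toBlocks₂₁).mulVec qp.2 := by
      calc x = (M⁻¹ * M).mulVec x := by rw [hMl, Matrix.one_mulVec]
      _ = M⁻¹.mulVec (M.mulVec x) := by rw [Matrix.mulVec_mulVec]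
      _ = (M⁻¹ * g.toBlocks₂₁).mulVec qp.2 := by rw [hxM, Matrix.mulVec_mulVec]
    rw [h1, hy, hxv, chiM, Matrix.add_mulVec]
    simp [Matrix.mulVec_mulVec, Matrix.mul_assoc]
    rfl
  · intro h
    refine ⟨(M⁻¹ * g.toBlocks₂₁).mulVec qp.2, St.mulVec ((M⁻¹ * g.toBlocks₂₁).mulVec qp.2),
      rfl, ?_⟩
    rw [← g.fromBlocks_toBlocks, Matrix.fromBlocks_mulVec]
    have key : g.toBlocks₂₁.mulVec qp.2 = M.mulVec ((M⁻¹ * g.toBlocks₂₁).mulVec qp.2) := by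
      rw [Matrix.mulVec_mulVec, ← Matrix.mul_assoc, hMr, Matrix.one_mul]
    have h2 : (M⁻¹ * g.toBlocks₂₁).mulVec qp.2 =
        g.toBlocks₂₁.mulVec qp.2 +
          g.toBlocks₂₂.mulVec (St.mulVec ((M⁻¹ * g.toBlocks₂₁).mulVec qp.2)) := by
      rw [key, hM, Matrix.sub_mulVec, Matrix.one_mulVec]
      simp only [Matrix.mulVec_mulVec, ← Matrix.mul_assoc]
      abel
    funext i
    cases i with
    | inl i =>
        have : qp.1 = g.toBlocks₁₁.mulVec qp.2 +
            g.toBlocks₁₂.mulVec (St.mulVec ((M⁻¹ * g.toBlocks₂₁).mulVec qp.2)) := by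
          rw [h, chiM, Matrix.add_mulVec]
          simp [Matrix.mulVec_mulVec, Matrix.mul_assoc]
          rfl
        exact congrFun this i
    | inr i => exact congrFun h2 i
end

section
/- Let g be a complex matrix of size α+mN with blocks a, b, c, d, let j ≥ 1, let H be an invertible j×j complex matrix, and write H̃ = 1_m ⊗ H (a (jm)×(jm) matrix). Let S be a (jm)×(jm) complex matrix such that 1 - d^{[j]}·(S ⊗ 1_N) is invertible. Then 1 - d^{[j]}·((H̃·S·H̃⁻¹) ⊗ 1_N) is invertible and χ_{g^{[j]}}(H̃·S·H̃⁻¹) = (1_α ⊗ H) · χ_{g^{[j]}}(S) · (1_α ⊗ H)⁻¹. -/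
open Matrix
open scoped Kronecker

def coreIdx {A V NN J : Type*} : (A × J) ⊕ (V × J) × NN → A ⊕ V × NN
  | Sum.inl (p, _) => Sum.inl p
  | Sum.inr ((v, _), k) => Sum.inr (v, k)

def levIdx {A V NN J : Type*} : (A × J) ⊕ (V × J) × NN → J
  | Sum.inl (_, μ) => μ
  | Sum.inr ((_, μ), _) => μ

/-- The amplification `g^{[J]}`, with blocks `a ⊗ 1_J`, `b ⊗ 1_J`, `c ⊗ 1_J`,
`d ⊗ 1_J`, acting on `ℂ^{A × J} ⊕ ((ℂ^V ⊗ ℂ^J) ⊗ ℂ^{NN})`. -/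
def ampM {A V NN : Type*} (J : Type*) [DecidableEq J]
    (g : Matrix (A ⊕ V × NN) (A ⊕ V × NN) ℂ) :
    Matrix ((A × J) ⊕ (V × J) × NN) ((A × J) ⊕ (V × J) × NN) ℂ :=
  fun x y => g (coreIdx x) (coreIdx y) * (if levIdx x = levIdx y then 1 else 0)

/-- Block-diagonal direct sum `S₁ ⊕ S₂` under `V × (J₁ ⊕ J₂) ≅ (V × J₁) ⊕ (V × J₂)`. -/
def sumDiagS {V J₁ J₂ : Type*} (S₁ : Matrix (V × J₁) (V × J₁) ℂ)
    (S₂ : Matrix (V × J₂) (V × J₂) ℂ) :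
    Matrix (V × (J₁ ⊕ J₂)) (V × (J₁ ⊕ J₂)) ℂ :=
  Matrix.reindex (Equiv.prodSumDistrib V J₁ J₂).symm (Equiv.prodSumDistrib V J₁ J₂).symm
    (Matrix.fromBlocks S₁ 0 0 S₂)

set_option linter.unusedSectionVars false

section Helpers
variable {A V NN J : Type*} [Fintype A] [Fintype V] [Fintype NN] [Fintype J]
  [DecidableEq A] [DecidableEq V] [DecidableEq NN] [DecidableEq J]

lemma dK_comm (g : Matrix (A ⊕ V × NN) (A ⊕ V × NN) ℂ) (H : Matrix J J ℂ) :
    (ampM J g).toBlocks₂₂ * (((1 : Matrix V V ℂ) ⊗ₖ H) ⊗ₖ (1 : Matrix NN NN ℂ)) =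
    (((1 : Matrix V V ℂ) ⊗ₖ H) ⊗ₖ (1 : Matrix NN NN ℂ)) * (ampM J g).toBlocks₂₂ := by
  ext ⟨⟨v, μ⟩, k⟩ ⟨⟨v', μ'⟩, k'⟩
  simp [Matrix.mul_apply, ampM, Matrix.toBlocks₂₂, Matrix.one_apply,
    Fintype.sum_prod_type, ite_and, coreIdx, levIdx, mul_comm, mul_assoc, mul_left_comm]
  rw [Fintype.sum_eq_single μ (fun x hx => mul_eq_zero_of_right _ (mul_eq_zero_of_left (if_neg (Ne.symm hx)) _)),
    Fintype.sum_eq_single μ' (fun x hx => mul_eq_zero_of_right _ (mul_eq_zero_of_left (if_neg hx) _))]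
  exact congrArg (fun t => H μ μ' * (t * _)) ((if_pos rfl).trans (if_pos rfl).symm)

lemma bK_comm (g : Matrix (A ⊕ V × NN) (A ⊕ V × NN) ℂ) (H : Matrix J J ℂ) :
    (ampM J g).toBlocks₁₂ * (((1 : Matrix V V ℂ) ⊗ₖ H) ⊗ₖ (1 : Matrix NN NN ℂ)) =
    ((1 : Matrix A A ℂ) ⊗ₖ H) * (ampM J g).toBlocks₁₂ := by
  ext ⟨p, μ⟩ ⟨⟨v', μ'⟩, k'⟩
  simp [Matrix.mul_apply, ampM, Matrix.toBlocks₁₂, Matrix.one_apply,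
    Fintype.sum_prod_type, ite_and, coreIdx, levIdx, mul_comm, mul_assoc, mul_left_comm]
  rw [Fintype.sum_eq_single μ (fun x hx => mul_eq_zero_of_right _ (mul_eq_zero_of_left (if_neg (Ne.symm hx)) _)),
    Fintype.sum_eq_single μ' (fun x hx => mul_eq_zero_of_right _ (mul_eq_zero_of_left (if_neg hx) _))]
  exact congrArg (fun t => H μ μ' * (t * _)) ((if_pos rfl).trans (if_pos rfl).symm)

lemma Kc_comm (g : Matrix (A ⊕ V × NN) (A ⊕ V × NN) ℂ) (H : Matrix J J ℂ) :
    (((1 : Matrix V V ℂ) ⊗ₖ H) ⊗ₖ (1 : Matrix NN NN ℂ)) * (ampM J g).toBlocks₂₁ =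
    (ampM J g).toBlocks₂₁ * ((1 : Matrix A A ℂ) ⊗ₖ H) := by
  ext ⟨⟨v, μ⟩, k⟩ ⟨p', μ'⟩
  simp [Matrix.mul_apply, ampM, Matrix.toBlocks₂₁, Matrix.one_apply,
    Fintype.sum_prod_type, ite_and, coreIdx, levIdx, mul_comm, mul_assoc, mul_left_comm]
  rw [Fintype.sum_eq_single μ' (fun x hx => mul_eq_zero_of_right _ (mul_eq_zero_of_left (if_neg hx) _)),
    Fintype.sum_eq_single μ (fun x hx => mul_eq_zero_of_right _ (mul_eq_zero_of_left (if_neg (Ne.symm hx)) _))]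
  exact congrArg (fun t => H μ μ' * (t * _)) ((if_pos rfl).trans (if_pos rfl).symm)

lemma aL_comm (g : Matrix (A ⊕ V × NN) (A ⊕ V × NN) ℂ) (H : Matrix J J ℂ) :
    (ampM J g).toBlocks₁₁ * ((1 : Matrix A A ℂ) ⊗ₖ H) =
    ((1 : Matrix A A ℂ) ⊗ₖ H) * (ampM J g).toBlocks₁₁ := by
  ext ⟨p, μ⟩ ⟨p', μ'⟩
  simp [Matrix.mul_apply, ampM, Matrix.toBlocks₁₁, Matrix.one_apply,
    Fintype.sum_prod_type, ite_and, coreIdx, levIdx, mul_comm, mul_assoc, mul_left_comm]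
  rw [Fintype.sum_eq_single μ (fun x hx => mul_eq_zero_of_right _ (mul_eq_zero_of_left (if_neg (Ne.symm hx)) _)),
    Fintype.sum_eq_single μ' (fun x hx => mul_eq_zero_of_right _ (mul_eq_zero_of_left (if_neg hx) _))]
  exact congrArg (fun t => H μ μ' * (t * _)) ((if_pos rfl).trans (if_pos rfl).symm)

lemma isUnit_one_kron {n q : Type*} [Fintype n] [Fintype q] [DecidableEq n] [DecidableEq q]
    (H : Matrix q q ℂ) (hH : IsUnit H) : IsUnit ((1 : Matrix n n ℂ) ⊗ₖ H) := by
  rw [Matrix.isUnit_iff_isUnit_det] at hH ⊢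
  rw [Matrix.det_kronecker]
  simpa using hH.pow (Fintype.card n)

lemma isUnit_kron_one {n q : Type*} [Fintype n] [Fintype q] [DecidableEq n] [DecidableEq q]
    (H : Matrix q q ℂ) (hH : IsUnit H) : IsUnit (H ⊗ₖ (1 : Matrix n n ℂ)) := by
  rw [Matrix.isUnit_iff_isUnit_det] at hH ⊢
  rw [Matrix.det_kronecker]
  simpa using hH.pow (Fintype.card n)

end Helpers

set_option maxHeartbeats 1000000 in
/-- equivariance of the amplified characteristic function under
conjugation by `H̃ = 1_m ⊗ H`. -/
theorem chi_amp_conj (α m N j : ℕ) (hm : 1 ≤ m) (hN : 1 ≤ N) (hj : 1 ≤ j)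
    (g : Matrix (Fin α ⊕ Fin m × Fin N) (Fin α ⊕ Fin m × Fin N) ℂ)
    (H : Matrix (Fin j) (Fin j) ℂ) (hH : IsUnit H)
    (S : Matrix (Fin m × Fin j) (Fin m × Fin j) ℂ)
    (hS : IsUnit ((1 : Matrix ((Fin m × Fin j) × Fin N) ((Fin m × Fin j) × Fin N) ℂ) -
      (ampM (Fin j) g).toBlocks₂₂ * (S ⊗ₖ (1 : Matrix (Fin N) (Fin N) ℂ)))) :
    IsUnit ((1 : Matrix ((Fin m × Fin j) × Fin N) ((Fin m × Fin j) × Fin N) ℂ) -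
        (ampM (Fin j) g).toBlocks₂₂ *
          ((((1 : Matrix (Fin m) (Fin m) ℂ) ⊗ₖ H) * S *
              ((1 : Matrix (Fin m) (Fin m) ℂ) ⊗ₖ H)⁻¹) ⊗ₖ
            (1 : Matrix (Fin N) (Fin N) ℂ))) ∧
      chiM (ampM (Fin j) g)
          (((1 : Matrix (Fin m) (Fin m) ℂ) ⊗ₖ H) * S *
            ((1 : Matrix (Fin m) (Fin m) ℂ) ⊗ₖ H)⁻¹) =
        ((1 : Matrix (Fin α) (Fin α) ℂ) ⊗ₖ H) * chiM (ampM (Fin j) g) S *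
          ((1 : Matrix (Fin α) (Fin α) ℂ) ⊗ₖ H)⁻¹ := by
  classical
  set a := (ampM (Fin j) g).toBlocks₁₁ with ha_def
  set b := (ampM (Fin j) g).toBlocks₁₂ with hb_def
  set c := (ampM (Fin j) g).toBlocks₂₁ with hc_def
  set d := (ampM (Fin j) g).toBlocks₂₂ with hd_def
  set Ht := (1 : Matrix (Fin m) (Fin m) ℂ) ⊗ₖ H with hHt_def
  set L := (1 : Matrix (Fin α) (Fin α) ℂ) ⊗ₖ H with hL_def
  set K := Ht ⊗ₖ (1 : Matrix (Fin N) (Fin N) ℂ) with hK_def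
  have hHtU : IsUnit Ht := isUnit_one_kron H hH
  have hLU : IsUnit L := isUnit_one_kron H hH
  have hKU : IsUnit K := isUnit_kron_one Ht hHtU
  have hHtd : IsUnit Ht.det := (Matrix.isUnit_iff_isUnit_det _).mp hHtU
  have hLd : IsUnit L.det := (Matrix.isUnit_iff_isUnit_det _).mp hLU
  have hKd : IsUnit K.det := (Matrix.isUnit_iff_isUnit_det _).mp hKU
  set T := Ht * S * Ht⁻¹ with hT_def
  set X := (1 : Matrix ((Fin m × Fin j) × Fin N) ((Fin m × Fin j) × Fin N) ℂ) -
      d * (S ⊗ₖ (1 : Matrix (Fin N) (Fin N) ℂ)) with hX_def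
  have hKinv : K⁻¹ = Ht⁻¹ ⊗ₖ (1 : Matrix (Fin N) (Fin N) ℂ) := by
    apply Matrix.inv_eq_right_inv
    rw [hK_def, ← Matrix.mul_kronecker_mul, Matrix.mul_nonsing_inv _ hHtd, Matrix.one_mul,
      Matrix.one_kronecker_one]
  have hTkron : T ⊗ₖ (1 : Matrix (Fin N) (Fin N) ℂ) =
      K * (S ⊗ₖ (1 : Matrix (Fin N) (Fin N) ℂ)) * K⁻¹ := by
    rw [hKinv, hT_def, hK_def, ← Matrix.mul_kronecker_mul, ← Matrix.mul_kronecker_mul,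
      Matrix.one_mul, Matrix.one_mul]
  have hdK : d * K = K * d := dK_comm g H
  have hbK : b * K = L * b := bK_comm g H
  have hKc : K * c = c * L := Kc_comm g H
  have haL : a * L = L * a := aL_comm g H
  have hX' : (1 : Matrix ((Fin m × Fin j) × Fin N) ((Fin m × Fin j) × Fin N) ℂ) -
      d * (T ⊗ₖ (1 : Matrix (Fin N) (Fin N) ℂ)) = K * X * K⁻¹ := by
    rw [hX_def, Matrix.mul_sub, Matrix.mul_one, Matrix.sub_mul,
      Matrix.mul_nonsing_inv _ hKd, hTkron]
    congr 1
    simp only [← Matrix.mul_assoc]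
    rw [hdK]
  have hKinvU : IsUnit K⁻¹ := Matrix.isUnit_nonsing_inv_iff.mpr hKU
  have hXU' : IsUnit (K * X * K⁻¹) := (hKU.mul hS).mul hKinvU
  refine ⟨by rw [hX']; exact hXU', ?_⟩
  -- inverse of conjugate
  have hXinv : ((1 : Matrix ((Fin m × Fin j) × Fin N) ((Fin m × Fin j) × Fin N) ℂ) -
      d * (T ⊗ₖ (1 : Matrix (Fin N) (Fin N) ℂ)))⁻¹ = K * X⁻¹ * K⁻¹ := by
    rw [hX', Matrix.mul_inv_rev, Matrix.mul_inv_rev,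
      Matrix.nonsing_inv_nonsing_inv _ hKd, ← Matrix.mul_assoc]
  have hcancel : ∀ (M : Matrix ((Fin m × Fin j) × Fin N) (Fin α × Fin j) ℂ),
      K⁻¹ * (K * M) = M := fun M => by
    rw [← Matrix.mul_assoc, Matrix.nonsing_inv_mul _ hKd, Matrix.one_mul]
  have hc2 : K⁻¹ * c = c * L⁻¹ := by
    calc K⁻¹ * c = K⁻¹ * (K * c * L⁻¹) := by
          rw [hKc, Matrix.mul_assoc c, Matrix.mul_nonsing_inv _ hLd, Matrix.mul_one]
      _ = c * L⁻¹ := by rw [Matrix.mul_assoc K, hcancel]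
  have ha2 : a = L * a * L⁻¹ := by
    rw [← haL, Matrix.mul_assoc, Matrix.mul_nonsing_inv _ hLd, Matrix.mul_one]
  rw [chiM, chiM, hXinv]
  show a + b * (T ⊗ₖ (1 : Matrix (Fin N) (Fin N) ℂ)) * (K * X⁻¹ * K⁻¹) * c = L * (a + b * (S ⊗ₖ (1 : Matrix (Fin N) (Fin N) ℂ)) * X⁻¹ * c) * L⁻¹
  rw [Matrix.mul_add, Matrix.add_mul, ← ha2, hTkron]
  congr 1
  calc b * (K * (S ⊗ₖ (1 : Matrix (Fin N) (Fin N) ℂ)) * K⁻¹) * (K * X⁻¹ * K⁻¹) * c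
      = L * b * ((S ⊗ₖ (1 : Matrix (Fin N) (Fin N) ℂ)) * (K⁻¹ * (K * (X⁻¹ * (K⁻¹ * c))))) := by
        rw [← hbK]; simp only [Matrix.mul_assoc]
    _ = L * b * ((S ⊗ₖ (1 : Matrix (Fin N) (Fin N) ℂ)) * (X⁻¹ * (c * L⁻¹))) := by rw [hcancel, hc2]
    _ = L * (b * (S ⊗ₖ (1 : Matrix (Fin N) (Fin N) ℂ)) * X⁻¹ * c) * L⁻¹ := by simp only [Matrix.mul_assoc]
end

section
/- Let g be a complex matrix of size α+mN₁, h a complex matrix of size α+mN₂, and j ≥ 1. Then, under the identifications defining amplifications, the matrices g^{[j]} ∘ h^{[j]} and (g ∘ h)^{[j]}, both of size jα + (jm)(N₁+N₂), lie in the same conjugacy class: there exists an invertible (N₁+N₂)×(N₁+N₂) complex matrix u such that g^{[j]} ∘ h^{[j]} = ι(u) · (g ∘ h)^{[j]} · ι(u)⁻¹, where ι(u) = 1_{jα} ⊕ (1_{jm} ⊗ u). -/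
open Matrix
open scoped Kronecker

def idxEquiv (A V NN J : Type*) : (A ⊕ V × NN) × J ≃ ((A × J) ⊕ (V × J) × NN) where
  toFun p := match p with
    | (Sum.inl a, μ) => Sum.inl (a, μ)
    | (Sum.inr (v, k), μ) => Sum.inr ((v, μ), k)
  invFun z := (coreIdx z, levIdx z)
  left_inv := by rintro ⟨a | ⟨v, k⟩, μ⟩ <;> rfl
  right_inv := by rintro (⟨a, μ⟩ | ⟨⟨v, μ⟩, k⟩) <;> rfl

lemma ampM_eq {A V NN : Type*} (J : Type*) [DecidableEq J]
    (g : Matrix (A ⊕ V × NN) (A ⊕ V × NN) ℂ) :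
    ampM J g = Matrix.reindex (idxEquiv A V NN J) (idxEquiv A V NN J)
      (g ⊗ₖ (1 : Matrix J J ℂ)) := by
  ext x y
  rcases x with ⟨a, μ⟩ | ⟨⟨v, μ⟩, k⟩ <;> rcases y with ⟨b, ν⟩ | ⟨⟨w, ν⟩, l⟩ <;>
    simp [ampM, idxEquiv, coreIdx, levIdx, Matrix.one_apply, Matrix.kroneckerMap_apply] <;>
    by_cases hμ : μ = ν <;> simp [hμ]

lemma ampM_mul {A V NN : Type*} [Fintype A] [Fintype V] [Fintype NN]
    (J : Type*) [Fintype J] [DecidableEq J]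
    (g h : Matrix (A ⊕ V × NN) (A ⊕ V × NN) ℂ) :
    ampM J (g * h) = ampM J g * ampM J h := by
  rw [ampM_eq, ampM_eq, ampM_eq, Matrix.reindex_apply, Matrix.reindex_apply,
    Matrix.reindex_apply, Matrix.submatrix_mul_equiv,
    ← Matrix.mul_kronecker_mul, Matrix.one_mul]

lemma tildeG_amp {A V N₁ N₂ J : Type*} [DecidableEq A] [DecidableEq V] [DecidableEq N₁]
    [DecidableEq N₂] [DecidableEq J]
    (g : Matrix (A ⊕ V × N₁) (A ⊕ V × N₁) ℂ) :
    tildeG (N₂ := N₂) (ampM J g) = ampM J (tildeG (N₂ := N₂) g) := by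
  ext x y
  rcases x with ⟨a, μ⟩ | ⟨⟨v, μ⟩, k | k⟩ <;> rcases y with ⟨b, ν⟩ | ⟨⟨w, ν⟩, l | l⟩ <;>
    simp [tildeG, ampM, sumEquivL, coreIdx, levIdx, Matrix.one_apply, Prod.ext_iff,
      ite_and, mul_comm, and_comm, and_assoc, and_left_comm] <;>
    (try ring_nf) <;> aesop

lemma hatH_amp {A V N₁ N₂ J : Type*} [DecidableEq A] [DecidableEq V] [DecidableEq N₁]
    [DecidableEq N₂] [DecidableEq J]
    (h : Matrix (A ⊕ V × N₂) (A ⊕ V × N₂) ℂ) :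
    hatH (N₁ := N₁) (ampM J h) = ampM J (hatH (N₁ := N₁) h) := by
  ext x y
  rcases x with ⟨a, μ⟩ | ⟨⟨v, μ⟩, k | k⟩ <;> rcases y with ⟨b, ν⟩ | ⟨⟨w, ν⟩, l | l⟩ <;>
    simp [hatH, ampM, sumEquivR, coreIdx, levIdx, Matrix.one_apply, Prod.ext_iff,
      ite_and, mul_comm, and_comm, and_assoc, and_left_comm] <;>
    (try ring_nf) <;> aesop

/-- `g^{[j]} ∘ h^{[j]}` and `(g ∘ h)^{[j]}` lie in the same
conjugacy class. -/
theorem amp_circ (α m N₁ N₂ j : ℕ) (hm : 1 ≤ m) (hN₁ : 1 ≤ N₁) (hN₂ : 1 ≤ N₂)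
    (hj : 1 ≤ j)
    (g : Matrix (Fin α ⊕ Fin m × Fin N₁) (Fin α ⊕ Fin m × Fin N₁) ℂ)
    (h : Matrix (Fin α ⊕ Fin m × Fin N₂) (Fin α ⊕ Fin m × Fin N₂) ℂ) :
    ∃ u : Matrix (Fin N₁ ⊕ Fin N₂) (Fin N₁ ⊕ Fin N₂) ℂ, IsUnit u ∧
      circM (ampM (Fin j) g) (ampM (Fin j) h) =
        iotaM (Fin α × Fin j) (Fin m × Fin j) (Fin N₁ ⊕ Fin N₂) u *
          ampM (Fin j) (circM g h) *
          (iotaM (Fin α × Fin j) (Fin m × Fin j) (Fin N₁ ⊕ Fin N₂) u)⁻¹ := by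
  refine ⟨1, isUnit_one, ?_⟩
  have hiota : iotaM (Fin α × Fin j) (Fin m × Fin j) (Fin N₁ ⊕ Fin N₂)
      (1 : Matrix (Fin N₁ ⊕ Fin N₂) (Fin N₁ ⊕ Fin N₂) ℂ) = 1 := by
    simp [iotaM, Matrix.one_kronecker_one, Matrix.fromBlocks_one]
  rw [hiota, inv_one, Matrix.one_mul, Matrix.mul_one]
  rw [circM, circM, tildeG_amp, hatH_amp, ← ampM_mul]
end

section
/- Let N > mα and let g and h be unitary complex matrices of size α+mN. If their images I_N g and I_N h, of size α+m(N+1), are conjugate by ι(v) for some unitary (N+1)×(N+1) matrix v (i.e. I_N h = ι(v)·(I_N g)·ι(v)⁻¹), then g and h are already conjugate at level N: there exists a unitary N×N matrix u with h = ι(u)·g·ι(u)⁻¹. In other words, the natural map of conjugacy-class spaces U(α+mN)//U(N) → U(α+m(N+1))//U(N+1) is injective for N > mα. -/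
open Matrix
open scoped Kronecker

section AuxLemmas

variable {V NN : Type*} [Fintype V] [Fintype NN] [DecidableEq V] [DecidableEq NN]

lemma one_kron_conjTranspose (u : Matrix NN NN ℂ) :
    ((1 : Matrix V V ℂ) ⊗ₖ u)ᴴ = (1 : Matrix V V ℂ) ⊗ₖ uᴴ := by
  ext ⟨x, i⟩ ⟨y, j⟩
  simp only [Matrix.conjTranspose_apply, Matrix.kroneckerMap_apply, star_mul']
  by_cases h : x = y
  · subst h; simp [Matrix.one_apply]
  · simp [Matrix.one_apply, h, Ne.symm h]

lemma iotaM_conjTranspose (A : Type*) [DecidableEq A] (u : Matrix NN NN ℂ) :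
    (iotaM A V NN u)ᴴ = iotaM A V NN uᴴ := by
  simp [iotaM, Matrix.fromBlocks_conjTranspose, one_kron_conjTranspose]

lemma iotaM_mul_iotaM (A : Type*) [Fintype A] [DecidableEq A] (u w : Matrix NN NN ℂ) :
    iotaM A V NN u * iotaM A V NN w = iotaM A V NN (u * w) := by
  rw [iotaM, iotaM, iotaM, Matrix.fromBlocks_multiply, ← Matrix.mul_kronecker_mul]
  simp

lemma iotaM_one (A : Type*) [DecidableEq A] :
    iotaM A V NN (1 : Matrix NN NN ℂ) = 1 := by
  rw [iotaM, Matrix.one_kronecker_one, Matrix.fromBlocks_one]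

lemma iotaM_isUnitary (A : Type*) [Fintype A] [DecidableEq A] {u : Matrix NN NN ℂ}
    (h : IsUnitaryM u) : IsUnitaryM (iotaM A V NN u) := by
  constructor
  · rw [iotaM_conjTranspose, iotaM_mul_iotaM, h.1, iotaM_one]
  · rw [iotaM_conjTranspose, iotaM_mul_iotaM, h.2, iotaM_one]

end AuxLemmas

/-- for `N > mα`, the natural map
`U(α+mN)//U(N) → U(α+m(N+1))//U(N+1)` is injective. -/
theorem unitary_classes_injective (α m N : ℕ) (hm : 1 ≤ m) (hN : m * α < N)
    (g h : Matrix (Fin α ⊕ Fin m × Fin N) (Fin α ⊕ Fin m × Fin N) ℂ)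
    (hgu : IsUnitaryM g) (hhu : IsUnitaryM h)
    (v : Matrix (Fin N ⊕ Fin 1) (Fin N ⊕ Fin 1) ℂ) (hvu : IsUnitaryM v)
    (hconj : embI h =
      iotaM (Fin α) (Fin m) (Fin N ⊕ Fin 1) v * embI g *
        (iotaM (Fin α) (Fin m) (Fin N ⊕ Fin 1) v)⁻¹) :
    ∃ u : Matrix (Fin N) (Fin N) ℂ, IsUnitaryM u ∧
      h = iotaM (Fin α) (Fin m) (Fin N) u * g *
        (iotaM (Fin α) (Fin m) (Fin N) u)⁻¹ := by
  classical
  -- notation for the blocks of `v`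
  set p := v.toBlocks₁₁ with hpdef
  set q := v.toBlocks₁₂ with hqdef
  set r := v.toBlocks₂₁ with hrdef
  set s := v.toBlocks₂₂ with hsdef
  set s₀ : ℂ := v (Sum.inr 0) (Sum.inr 0) with hs₀def
  have hs : s = s₀ • (1 : Matrix (Fin 1) (Fin 1) ℂ) := by
    ext i j
    have hi : i = 0 := Subsingleton.elim _ _
    have hj : j = 0 := Subsingleton.elim _ _
    subst hi; subst hj
    simp [hsdef, hs₀def, Matrix.toBlocks₂₂, Matrix.one_apply]
  have hv : v = Matrix.fromBlocks p q r s := (Matrix.fromBlocks_toBlocks v).symm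
  -- unitarity relations among the blocks of v
  have hvH : vᴴ = Matrix.fromBlocks pᴴ rᴴ qᴴ sᴴ := by
    rw [hv, Matrix.fromBlocks_conjTranspose]
  have hbig : Matrix.fromBlocks (pᴴ * p + rᴴ * r) (pᴴ * q + rᴴ * s)
      (qᴴ * p + sᴴ * r) (qᴴ * q + sᴴ * s) = Matrix.fromBlocks 1 0 0 1 := by
    rw [Matrix.fromBlocks_one]
    rw [← hvu.2, hvH]
    nth_rewrite 1 [hv]
    rw [Matrix.fromBlocks_multiply]
  have hbig' : Matrix.fromBlocks (p * pᴴ + q * qᴴ) (p * rᴴ + q * sᴴ)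
      (r * pᴴ + s * qᴴ) (r * rᴴ + s * sᴴ) = Matrix.fromBlocks 1 0 0 1 := by
    rw [Matrix.fromBlocks_one]
    rw [← hvu.1, hvH]
    nth_rewrite 1 [hv]
    rw [Matrix.fromBlocks_multiply]
  rw [Matrix.fromBlocks_inj] at hbig hbig'
  obtain ⟨h11, h12, h21, h22⟩ := hbig
  obtain ⟨-, -, -, h22'⟩ := hbig'
  -- the correcting scalar and the candidate unitary
  set c₀ : ℂ := (1 + (starRingEnd ℂ) s₀) / (1 - s₀ * (starRingEnd ℂ) s₀) with hc₀def
  set u : Matrix (Fin N) (Fin N) ℂ := p + c₀ • (q * r) with hudef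
  -- unitarity of u
  have huH : uᴴ = pᴴ + (starRingEnd ℂ) c₀ • (rᴴ * qᴴ) := by
    rw [hudef]
    rw [Matrix.conjTranspose_add, Matrix.conjTranspose_smul, Matrix.conjTranspose_mul]
    rfl
  have l1 : pᴴ * p = 1 - rᴴ * r := eq_sub_of_add_eq h11
  have l2 : pᴴ * q = -(rᴴ * s) := eq_neg_of_add_eq_zero_left h12
  have l3 : qᴴ * p = -(sᴴ * r) := eq_neg_of_add_eq_zero_left h21
  have l4 : qᴴ * q = 1 - sᴴ * s := eq_sub_of_add_eq h22
  have e1 : pᴴ * (q * r) = -(s₀ • (rᴴ * r)) := by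
    rw [← Matrix.mul_assoc, l2, hs]
    simp [Matrix.smul_mul, Matrix.mul_smul, Matrix.mul_assoc]
  have e2 : rᴴ * qᴴ * (p + c₀ • (q * r)) =
      -((starRingEnd ℂ) s₀ • (rᴴ * r)) +
        c₀ • (rᴴ * r - (s₀ * (starRingEnd ℂ) s₀) • (rᴴ * r)) := by
    rw [Matrix.mul_add, Matrix.mul_smul]
    congr 1
    · rw [Matrix.mul_assoc, l3, hs]
      simp [Matrix.conjTranspose_smul, Matrix.smul_mul, Matrix.mul_smul, Matrix.mul_assoc]
    · congr 1
      rw [← Matrix.mul_assoc, Matrix.mul_assoc rᴴ qᴴ q, l4, hs]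
      simp [Matrix.conjTranspose_smul, Matrix.mul_sub, Matrix.sub_mul,
        Matrix.smul_mul, Matrix.mul_smul, Matrix.mul_assoc, smul_smul]
  have huu : uᴴ * u = 1 := by
    rw [huH]
    nth_rewrite 1 [hudef]
    rw [Matrix.add_mul, Matrix.mul_add, Matrix.mul_smul, Matrix.smul_mul, e1, l1]
    rw [e2]
    rcases eq_or_ne r (0 : Matrix (Fin 1) (Fin N) ℂ) with hr0 | hr0
    · rw [hr0]; simp
    · have hden : (1 : ℂ) - s₀ * (starRingEnd ℂ) s₀ ≠ 0 := by
        intro h0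
        apply hr0
        have hrr : r * rᴴ = 0 := by
          have hss : s * sᴴ = (s₀ * (starRingEnd ℂ) s₀) • (1 : Matrix (Fin 1) (Fin 1) ℂ) := by
            rw [hs]
            simp [Matrix.conjTranspose_smul, Matrix.smul_mul, Matrix.mul_smul, smul_smul,
              mul_comm]
          have : r * rᴴ + (s₀ * (starRingEnd ℂ) s₀) • (1 : Matrix (Fin 1) (Fin 1) ℂ) = 1 := by
            rw [← hss]; exact h22'
          have h1 : r * rᴴ = ((1 : ℂ) - s₀ * (starRingEnd ℂ) s₀) • (1 : Matrix (Fin 1) (Fin 1) ℂ) := by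
            rw [sub_smul, one_smul]
            exact eq_sub_of_add_eq this
          rw [h1, h0, zero_smul]
        have hrH : rᴴ = 0 := by
          open scoped ComplexOrder in
          have := Matrix.conjTranspose_mul_self_eq_zero (A := rᴴ)
          rw [Matrix.conjTranspose_conjTranspose] at this
          exact this.mp hrr
        rw [← Matrix.conjTranspose_conjTranspose r, hrH, Matrix.conjTranspose_zero]
      have hstarc : (starRingEnd ℂ) c₀ = (1 + s₀) / (1 - s₀ * (starRingEnd ℂ) s₀) := by
        rw [hc₀def, map_div₀, _root_.map_add, _root_.map_one, _root_.map_sub, _root_.map_mul]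
        simp [mul_comm]
      match_scalars
      · ring
      · rw [hstarc, hc₀def]
        have hden' : (1 : ℂ) - (starRingEnd ℂ) s₀ * s₀ ≠ 0 := by rwa [mul_comm]
        field_simp
        ring
  have huu' : u * uᴴ = 1 := mul_eq_one_comm.mp huu
  -- from the conjugation hypothesis to block equations
  set W := iotaM (Fin α) (Fin m) (Fin N ⊕ Fin 1) v with hWdef
  have hWu : IsUnitaryM W := iotaM_isUnitary _ hvu
  have hWinv : W⁻¹ = Wᴴ := Matrix.inv_eq_right_inv hWu.1
  have E : embI h * W = W * embI g := by
    rw [hconj, hWinv, Matrix.mul_assoc (W * embI g) Wᴴ W, hWu.2, mul_one]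
  set e : (Fin α ⊕ Fin m × Fin N) ⊕ Fin m × Fin 1 ≃ Fin α ⊕ Fin m × (Fin N ⊕ Fin 1) :=
    sumEquivL (Fin α) (Fin m) (Fin N) (Fin 1) with hedef
  have E2 := congrArg (Matrix.reindexAlgEquiv ℂ ℂ e.symm) E
  simp only [_root_.map_mul, Matrix.reindexAlgEquiv_apply] at E2
  have hreh : ∀ M : Matrix (Fin α ⊕ Fin m × Fin N) (Fin α ⊕ Fin m × Fin N) ℂ,
      Matrix.reindex e.symm e.symm (embI M) = Matrix.fromBlocks M 0 0 1 := by
    intro M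
    have : embI M = Matrix.reindex e e (Matrix.fromBlocks M 0 0 1) := rfl
    rw [this, ← Matrix.reindex_symm]
    exact (Matrix.reindex e e).symm_apply_apply _
  rw [hreh g, hreh h] at E2
  -- explicit block form of the reindexed W
  set B₁₁ : Matrix (Fin α ⊕ Fin m × Fin N) (Fin α ⊕ Fin m × Fin N) ℂ :=
    Matrix.fromBlocks 1 0 0 ((1 : Matrix (Fin m) (Fin m) ℂ) ⊗ₖ p) with hB11def
  set B₁₂ : Matrix (Fin α ⊕ Fin m × Fin N) (Fin m × Fin 1) ℂ :=
    Matrix.fromRows 0 ((1 : Matrix (Fin m) (Fin m) ℂ) ⊗ₖ q) with hB12def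
  set B₂₁ : Matrix (Fin m × Fin 1) (Fin α ⊕ Fin m × Fin N) ℂ :=
    Matrix.fromCols 0 ((1 : Matrix (Fin m) (Fin m) ℂ) ⊗ₖ r) with hB21def
  set B₂₂ : Matrix (Fin m × Fin 1) (Fin m × Fin 1) ℂ :=
    (1 : Matrix (Fin m) (Fin m) ℂ) ⊗ₖ s with hB22def
  have hW' : Matrix.reindex e.symm e.symm W = Matrix.fromBlocks B₁₁ B₁₂ B₂₁ B₂₂ := by
    ext i j
    rcases i with (a | ⟨x, n⟩) | ⟨x, k⟩ <;> rcases j with (b | ⟨y, n'⟩) | ⟨y, k'⟩ <;> rfl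
  rw [hW'] at E2
  rw [Matrix.fromBlocks_multiply, Matrix.fromBlocks_multiply] at E2
  simp only [Matrix.zero_mul, Matrix.mul_zero, Matrix.one_mul, Matrix.mul_one,
    add_zero, zero_add] at E2
  rw [Matrix.fromBlocks_inj] at E2
  obtain ⟨hA, hB, hC, -⟩ := E2
  -- the block matrix built from u
  have hBC : B₁₂ * B₂₁ =
      Matrix.fromBlocks 0 0 0 ((1 : Matrix (Fin m) (Fin m) ℂ) ⊗ₖ (q * r)) := by
    rw [hB12def, hB21def, Matrix.fromRows_mul_fromCols, ← Matrix.mul_kronecker_mul]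
    simp
  have hUdef : iotaM (Fin α) (Fin m) (Fin N) u = B₁₁ + c₀ • (B₁₂ * B₂₁) := by
    rw [hBC, hB11def, iotaM, hudef, Matrix.kronecker_add, Matrix.kronecker_smul,
      Matrix.fromBlocks_smul, Matrix.fromBlocks_add]
    simp
  have hE : h * iotaM (Fin α) (Fin m) (Fin N) u = iotaM (Fin α) (Fin m) (Fin N) u * g := by
    rw [hUdef, Matrix.mul_add, Matrix.add_mul, hA, Matrix.mul_smul, Matrix.smul_mul]
    congr 2
    rw [← Matrix.mul_assoc, hB, Matrix.mul_assoc, ← hC]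
  have hUu : IsUnitaryM (iotaM (Fin α) (Fin m) (Fin N) u) :=
    iotaM_isUnitary _ ⟨huu', huu⟩
  refine ⟨u, ⟨huu', huu⟩, ?_⟩
  rw [Matrix.inv_eq_right_inv hUu.1, ← hE, Matrix.mul_assoc, hUu.1, mul_one]
end
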